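/- arXiv:1005.0098 — 8 statements merged into one kernel-verified Lean document; each statement's English description precedes it below -/
import Mathlib

section
/- Let e(ζ) = Σ_{i≥0} α_i ζ^{q^i} be an entire 𝔽_q-linear series and let ω ∈ C with ω ≠ 0. Then the formal power series s(t) := Σ_{i≥0} e(ω/θ^{i+1}) t^i has radius of convergence exactly q. -/
open scoped NNReal ENNReal

/-- The radius of convergence of a power series `∑ f i * t ^ i` with coefficients in a
normed field: the supremum of all `r ≥ 0` such that the series converges at every point
of norm `< r`. -/
noncomputable def radiusOfConv {C : Type*} [NormedField C] (f : ℕ → C) : ℝ≥0∞ :=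
  ⨆ (r : ℝ≥0) (_ : ∀ t₀ : C, ‖t₀‖ < (r : ℝ) → Summable fun i => f i * t₀ ^ i), (r : ℝ≥0∞)

open Filter

private lemma aux_norm_E {C : Type*} [NormedField C] [CompleteSpace C] [IsUltrametricDist C]
    (q : ℕ) (hq2 : 2 ≤ q)
    (α : ℕ → C) (hα0 : α 0 = 1)
    (hdecay : ∀ r : ℝ, 0 < r →
      Filter.Tendsto (fun i : ℕ => ‖α i‖ * r ^ (q ^ i)) Filter.atTop (nhds 0))
    (B : ℝ) (hB : ∀ j, ‖α j‖ ≤ B)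
    (ζ : C) (hζ0 : ζ ≠ 0) (hζ1 : ‖ζ‖ ≤ 1) (hsmall : B * ‖ζ‖ < 1) :
    ‖∑' j : ℕ, α j * ζ ^ q ^ j‖ = ‖ζ‖ := by
  have hζpos : 0 < ‖ζ‖ := norm_pos_iff.mpr hζ0
  set f : ℕ → C := fun j => α j * ζ ^ q ^ j with hf
  have hsumf : Summable f := by
    apply NonarchimedeanAddGroup.summable_of_tendsto_cofinite_zero
    rw [Nat.cofinite_eq_atTop]
    apply squeeze_zero_norm' ?_ (hdecay ‖ζ‖ hζpos)
    filter_upwards with j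
    rw [hf, norm_mul, norm_pow]
  have hf0 : f 0 = ζ := by simp [hf, hα0]
  have hB0 : 0 ≤ B := le_trans (norm_nonneg _) (hB 0)
  have hT : ‖∑' j : ℕ, f (j + 1)‖ ≤ B * ‖ζ‖ ^ 2 := by
    apply IsUltrametricDist.norm_tsum_le_of_forall_le_of_nonneg (by positivity)
    intro j
    rw [hf, norm_mul, norm_pow]
    have h1 : ‖ζ‖ ^ q ^ (j + 1) ≤ ‖ζ‖ ^ 2 :=
      pow_le_pow_of_le_one hζpos.le hζ1 (le_trans hq2 (Nat.le_self_pow (by simp) _))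
    exact mul_le_mul (hB _) h1 (by positivity) hB0
  have hTlt : ‖∑' j : ℕ, f (j + 1)‖ < ‖ζ‖ := by
    refine hT.trans_lt ?_
    calc B * ‖ζ‖ ^ 2 = (B * ‖ζ‖) * ‖ζ‖ := by ring
    _ < 1 * ‖ζ‖ := mul_lt_mul_of_pos_right hsmall hζpos
    _ = ‖ζ‖ := one_mul _
  have := Summable.tsum_eq_zero_add hsumf
  rw [this, IsUltrametricDist.norm_add_eq_max_of_norm_ne_norm
      (by rw [hf0]; exact hTlt.ne'), hf0]
  exact max_eq_left hTlt.le

/-- If `E(ζ) = ∑ α_i ζ^{q^i}` is an entire `𝔽_q`-linear series and `ω ≠ 0`, then the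
Anderson generating function `s(t) = ∑_{i ≥ 0} E(ω/θ^{i+1}) t^i` has radius of
convergence exactly `q`. -/
theorem radius_of_anderson_generating_function
    {C : Type*} [NormedField C] [CompleteSpace C] [IsAlgClosed C] [IsUltrametricDist C]
    (p e : ℕ) (hp : p.Prime) (he : 0 < e) [CharP C p]
    (q : ℕ) (hq : q = p ^ e)
    (θ : C) (hθ : ‖θ‖ = (q : ℝ))
    (α : ℕ → C) (hα0 : α 0 = 1)
    (hdecay : ∀ r : ℝ, 0 < r →
      Filter.Tendsto (fun i : ℕ => ‖α i‖ * r ^ (q ^ i)) Filter.atTop (nhds 0))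
    (E : C → C) (hE : ∀ ζ : C, E ζ = ∑' i : ℕ, α i * ζ ^ q ^ i)
    (ω : C) (hω : ω ≠ 0) :
    radiusOfConv (fun i => E (ω / θ ^ (i + 1))) = (q : ℝ≥0∞) := by
  -- basic facts about q and θ
  have hq2 : 2 ≤ q := by
    rw [hq]
    calc 2 = 2 ^ 1 := (pow_one 2).symm
    _ ≤ 2 ^ e := Nat.pow_le_pow_right (by norm_num) he
    _ ≤ p ^ e := Nat.pow_le_pow_left hp.two_le e
  have hqR : (1 : ℝ) < (q : ℝ) := by exact_mod_cast lt_of_lt_of_le one_lt_two hq2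
  have hqpos : (0 : ℝ) < (q : ℝ) := lt_trans one_pos hqR
  have hθ0 : θ ≠ 0 := by
    intro h
    rw [h, norm_zero] at hθ
    exact hqpos.ne hθ
  -- a uniform bound on the coefficients
  obtain ⟨B₀, hB₀⟩ := ((by simpa using hdecay 1 one_pos :
      Tendsto (fun i : ℕ => ‖α i‖) atTop (nhds 0)).bddAbove_range)
  set B : ℝ := max B₀ 1 with hBdef
  have hB : ∀ j, ‖α j‖ ≤ B := fun j =>
    le_trans (hB₀ (Set.mem_range_self j)) (le_max_left _ _)
  have hB1 : (1 : ℝ) ≤ B := le_max_right _ _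
  have hBpos : (0 : ℝ) < B := lt_of_lt_of_le one_pos hB1
  -- the evaluation points
  set ζ : ℕ → C := fun i => ω / θ ^ (i + 1) with hζdef
  have hζ0 : ∀ i, ζ i ≠ 0 := fun i => div_ne_zero hω (pow_ne_zero _ hθ0)
  have hζn : ∀ i, ‖ζ i‖ = ‖ω‖ / (q : ℝ) ^ (i + 1) := by
    intro i
    rw [hζdef]
    simp [norm_div, norm_pow, hθ]
  have hζtend : Tendsto (fun i : ℕ => ‖ζ i‖) atTop (nhds 0) := by
    have h1 : Tendsto (fun i : ℕ => ((q : ℝ)⁻¹) ^ i) atTop (nhds 0) :=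
      tendsto_pow_atTop_nhds_zero_of_lt_one (by positivity)
        (by rw [inv_lt_one_iff₀]; right; exact hqR)
    have h2 : Tendsto (fun i : ℕ => ‖ω‖ * ((q : ℝ)⁻¹) ^ (i + 1)) atTop (nhds 0) := by
      simpa using (h1.comp (tendsto_add_atTop_nat 1)).const_mul ‖ω‖
    refine h2.congr fun i => ?_
    rw [hζn i, div_eq_mul_inv, inv_pow]
  -- eventually the norm of `E (ζ i)` is exactly `‖ζ i‖`
  have hsmall : ∀ᶠ i in atTop, ‖ζ i‖ < min 1 B⁻¹ :=
    hζtend.eventually_lt_const (by positivity)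
  obtain ⟨N, hN⟩ := eventually_atTop.mp hsmall
  have hEnorm : ∀ i, N ≤ i → ‖E (ζ i)‖ = ‖ζ i‖ := by
    intro i hi
    rw [hE]
    refine aux_norm_E q hq2 α hα0 hdecay B hB (ζ i) (hζ0 i)
      (le_of_lt (lt_of_lt_of_le (hN i hi) (min_le_left _ _))) ?_
    have h := lt_of_lt_of_le (hN i hi) (min_le_right _ _)
    calc B * ‖ζ i‖ < B * B⁻¹ := by
          exact mul_lt_mul_of_pos_left h hBpos
    _ = 1 := mul_inv_cancel₀ hBpos.ne'
  -- now compute the radius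
  refine le_antisymm ?_ ?_
  · -- radius ≤ q
    refine iSup₂_le fun r hr => ?_
    rw [show ((q : ℝ≥0∞)) = ((q : ℝ≥0) : ℝ≥0∞) by simp]
    rw [ENNReal.coe_le_coe]
    by_contra hcon
    push_neg at hcon
    have hrq : (q : ℝ) < (r : ℝ) := by exact_mod_cast hcon
    have hsum := hr θ (by rw [hθ]; exact hrq)
    have htend := hsum.tendsto_atTop_zero
    have htendn : Tendsto (fun i : ℕ => ‖E (ζ i) * θ ^ i‖) atTop (nhds 0) :=
      (tendsto_zero_iff_norm_tendsto_zero.mp htend)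
    have hconst : Tendsto (fun _ : ℕ => ‖ω‖ / (q : ℝ)) atTop (nhds 0) := by
      refine htendn.congr' ?_
      filter_upwards [eventually_ge_atTop N] with i hi
      rw [norm_mul, norm_pow, hθ, hEnorm i hi, hζn i]
      field_simp
      ring
    have : ‖ω‖ / (q : ℝ) = 0 := tendsto_nhds_unique tendsto_const_nhds hconst
    rw [div_eq_zero_iff] at this
    rcases this with h | h
    · exact hω (norm_eq_zero.mp h)
    · exact hqpos.ne' h
  · -- q ≤ radius
    rw [show ((q : ℝ≥0∞)) = ((q : ℝ≥0) : ℝ≥0∞) by simp]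
    refine le_iSup₂_of_le (q : ℝ≥0) (fun t₀ ht₀ => ?_) le_rfl
    have ht₀q : ‖t₀‖ < (q : ℝ) := by
      rw [show (((q : ℝ≥0) : ℝ)) = (q : ℝ) by simp] at ht₀
      exact ht₀
    apply NonarchimedeanAddGroup.summable_of_tendsto_cofinite_zero
    rw [Nat.cofinite_eq_atTop]
    have hgeo : Tendsto (fun i : ℕ => (‖ω‖ / (q : ℝ)) * (‖t₀‖ / (q : ℝ)) ^ i)
        atTop (nhds 0) := by
      have h1 : Tendsto (fun i : ℕ => (‖t₀‖ / (q : ℝ)) ^ i) atTop (nhds 0) :=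
        tendsto_pow_atTop_nhds_zero_of_lt_one (by positivity)
          ((div_lt_one hqpos).mpr ht₀q)
      simpa using h1.const_mul (‖ω‖ / (q : ℝ))
    refine squeeze_zero_norm' ?_ hgeo
    filter_upwards [eventually_ge_atTop N] with i hi
    rw [norm_mul, norm_pow, hEnorm i hi, hζn i]
    apply le_of_eq
    rw [div_pow, pow_succ]
    ring
end

section
/- Let e(ζ) = Σ_{i≥0} α_i ζ^{q^i} be an entire 𝔽_q-linear series and let ω ∈ C. Then for every t₀ ∈ C with |t₀| < q, the two series Σ_{i≥0} e(ω/θ^{i+1}) t₀^i and Σ_{j≥0} α_j ω^{q^j}/(θ^{q^j} − t₀) both converge and have the same sum. -/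
/-!
Expanding each `1 / (θ^{q^j} - t₀)` as a geometric series in `t₀ / θ^{q^j}` turns the right-hand
side into the double series `∑_{i,j} α_j ω^{q^j} t₀^i / θ^{q^j (i+1)}`, whose sum over `j` for
fixed `i` is `E(ω/θ^{i+1}) t₀^i`. Since `|θ| > 1`, the term is bounded by
`(|t₀|/|θ|)^i · |α_j| (|ω|/|θ|)^{q^j}`, a product of a geometric series and a series that converges
by the decay of the `α_j`; so the double series converges absolutely and both iterated sums agree.
-/

open Filter Topology

theorem summable_mul_pow_pow_of_tendsto {a : ℕ → ℝ} (ha : 0 ≤ a) {q : ℕ} (hq : 1 < q)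
    (hdecay : ∀ r : ℝ, 0 < r → Tendsto (fun i => a i * r ^ q ^ i) atTop (𝓝 0))
    {R : ℝ} (hR : 0 ≤ R) : Summable fun i => a i * R ^ q ^ i := by
  obtain ⟨M, hM⟩ := (hdecay (2 * R + 1) (by positivity)).bddAbove_range
  have hM0 : 0 ≤ M := (mul_nonneg (ha 0) (by positivity)).trans (hM ⟨0, rfl⟩)
  refine summable_geometric_two.mul_left M |>.of_nonneg_of_le
    (fun i => mul_nonneg (ha i) (by positivity)) fun i => ?_
  calc a i * R ^ q ^ i ≤ a i * ((2 * R + 1) * (1 / 2)) ^ q ^ i := by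
        gcongr
        · exact ha i
        · linarith
    _ = a i * (2 * R + 1) ^ q ^ i * (1 / 2) ^ q ^ i := by rw [mul_pow, mul_assoc]
    _ ≤ M * (1 / 2) ^ i :=
        mul_le_mul (hM ⟨i, rfl⟩)
          (pow_le_pow_of_le_one (by norm_num) (by norm_num) (Nat.lt_pow_self hq).le)
          (by positivity) hM0

theorem hasSum_pow_div_pow_succ {K : Type*} [NormedField K] {t d : K} (h : ‖t‖ < ‖d‖) :
    HasSum (fun n : ℕ => t ^ n / d ^ (n + 1)) (d - t)⁻¹ := by
  have hd : d ≠ 0 := norm_pos_iff.mp ((norm_nonneg t).trans_lt h)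
  have hratio : ‖t / d‖ < 1 := by
    rwa [norm_div, div_lt_one ((norm_nonneg t).trans_lt h)]
  have hterm : (fun n : ℕ => t ^ n / d ^ (n + 1)) = fun n => d⁻¹ * (t / d) ^ n := by
    funext n
    rw [div_pow, pow_succ]
    field_simp
  have hsum : (d - t)⁻¹ = d⁻¹ * (1 - t / d)⁻¹ := by
    rw [← mul_inv, mul_one_sub, mul_div_cancel₀ t hd]
  rw [hterm, hsum]
  exact (hasSum_geometric_of_norm_lt_one hratio).mul_left d⁻¹

theorem Summable.hasSum_fiberwise_fst_and_snd {β γ G : Type*} [AddCommMonoid G]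
    [TopologicalSpace G] [ContinuousAdd G] [RegularSpace G] {f : β × γ → G} (hf : Summable f)
    {a : β → G} {b : γ → G} (ha : ∀ i, HasSum (fun j => f (i, j)) (a i))
    (hb : ∀ j, HasSum (fun i => f (i, j)) (b j)) :
    HasSum a (∑' p, f p) ∧ HasSum b (∑' p, f p) := by
  refine ⟨hf.hasSum.prod_fiberwise ha, ?_⟩
  rw [← (Equiv.prodComm γ β).tsum_eq]
  exact hf.prod_symm.hasSum.prod_fiberwise hb

section AndersonTerm

variable {K : Type*} [NormedField K]

def andersonTerm (α : ℕ → K) (q : ℕ) (θ ω t : K) (ij : ℕ × ℕ) : K :=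
  α ij.2 * ω ^ q ^ ij.2 * (t ^ ij.1 / (θ ^ q ^ ij.2) ^ (ij.1 + 1))

variable (α : ℕ → K) (q : ℕ) (θ ω t : K)

theorem andersonTerm_eq (i j : ℕ) :
    andersonTerm α q θ ω t (i, j) = α j * (ω / θ ^ (i + 1)) ^ q ^ j * t ^ i := by
  rw [andersonTerm, pow_right_comm, div_pow]
  ring

theorem hasSum_andersonTerm_fst {j : ℕ} (h : ‖t‖ < ‖θ ^ q ^ j‖) :
    HasSum (fun i => andersonTerm α q θ ω t (i, j)) (α j * ω ^ q ^ j / (θ ^ q ^ j - t)) := by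
  rw [div_eq_mul_inv]
  exact (hasSum_pow_div_pow_succ h).mul_left (α j * ω ^ q ^ j)

theorem norm_andersonTerm_le (hq : 0 < q) (hθ : 1 ≤ ‖θ‖) (i j : ℕ) :
    ‖andersonTerm α q θ ω t (i, j)‖ ≤ (‖t‖ / ‖θ‖) ^ i * (‖α j‖ * (‖ω‖ / ‖θ‖) ^ q ^ j) := by
  have hθ0 : 0 < ‖θ‖ := one_pos.trans_le hθ
  have hθq : ‖θ‖ ^ i ≤ (‖θ‖ ^ q ^ j) ^ i :=
    pow_le_pow_left₀ hθ0.le (le_self_pow₀ hθ (pow_pos hq j).ne') i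
  calc ‖andersonTerm α q θ ω t (i, j)‖
      = ‖α j‖ * ‖ω‖ ^ q ^ j * (‖t‖ ^ i / ((‖θ‖ ^ q ^ j) ^ i * ‖θ‖ ^ q ^ j)) := by
        simp only [andersonTerm, norm_mul, norm_div, norm_pow, pow_succ]
    _ ≤ ‖α j‖ * ‖ω‖ ^ q ^ j * (‖t‖ ^ i / (‖θ‖ ^ i * ‖θ‖ ^ q ^ j)) := by
        gcongr
    _ = (‖t‖ / ‖θ‖) ^ i * (‖α j‖ * (‖ω‖ / ‖θ‖) ^ q ^ j) := by
        rw [div_pow, div_pow]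
        field_simp

theorem summable_andersonTerm [CompleteSpace K] (hq : 1 < q)
    (hdecay : ∀ r : ℝ, 0 < r → Tendsto (fun i => ‖α i‖ * r ^ q ^ i) atTop (𝓝 0))
    (hθ : 1 ≤ ‖θ‖) (ht : ‖t‖ < ‖θ‖) : Summable (andersonTerm α q θ ω t) := by
  have hθ0 : 0 < ‖θ‖ := one_pos.trans_le hθ
  have hgeom : Summable fun i : ℕ => (‖t‖ / ‖θ‖) ^ i :=
    summable_geometric_of_lt_one (by positivity) ((div_lt_one hθ0).mpr ht)
  have hcoeff : Summable fun j => ‖α j‖ * (‖ω‖ / ‖θ‖) ^ q ^ j :=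
    summable_mul_pow_pow_of_tendsto (fun j => norm_nonneg (α j)) hq hdecay (by positivity)
  refine (hgeom.mul_of_nonneg hcoeff (fun i => by positivity) fun j => by positivity)
    |>.of_norm_bounded fun ij => ?_
  exact norm_andersonTerm_le α q θ ω t (by omega) hθ ij.1 ij.2

end AndersonTerm

theorem anderson_generating_function_partial_fractions_general
    {C : Type*} [NormedField C] [CompleteSpace C]
    (p e : ℕ) (hp : p.Prime) (he : 0 < e)
    (q : ℕ) (hq : q = p ^ e)
    (θ : C) (hθ : ‖θ‖ = (q : ℝ))
    (α : ℕ → C)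
    (hdecay : ∀ r : ℝ, 0 < r →
      Filter.Tendsto (fun i : ℕ => ‖α i‖ * r ^ (q ^ i)) Filter.atTop (nhds 0))
    (E : C → C) (hE : ∀ ζ : C, E ζ = ∑' i : ℕ, α i * ζ ^ q ^ i)
    (ω : C) (t₀ : C) (ht₀ : ‖t₀‖ < (q : ℝ)) :
    Summable (fun i : ℕ => E (ω / θ ^ (i + 1)) * t₀ ^ i) ∧
    Summable (fun j : ℕ => α j * ω ^ q ^ j / (θ ^ q ^ j - t₀)) ∧
    ∑' i : ℕ, E (ω / θ ^ (i + 1)) * t₀ ^ i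
      = ∑' j : ℕ, α j * ω ^ q ^ j / (θ ^ q ^ j - t₀) := by
  have hq1 : 1 < q := hq ▸ Nat.one_lt_pow he.ne' hp.one_lt
  have hθ1 : 1 ≤ ‖θ‖ := hθ ▸ mod_cast hq1.le
  have ht : ‖t₀‖ < ‖θ‖ := hθ ▸ ht₀
  have hf := summable_andersonTerm α q θ ω t₀ hq1 hdecay hθ1 ht
  have hrows (i : ℕ) :
      HasSum (fun j => andersonTerm α q θ ω t₀ (i, j)) (E (ω / θ ^ (i + 1)) * t₀ ^ i) := by
    simpa only [andersonTerm_eq, tsum_mul_right, ← hE] using (hf.prod_factor i).hasSum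
  have hcols (j : ℕ) : HasSum (fun i => andersonTerm α q θ ω t₀ (i, j))
      (α j * ω ^ q ^ j / (θ ^ q ^ j - t₀)) := by
    refine hasSum_andersonTerm_fst α q θ ω t₀ ?_
    rw [norm_pow]
    exact ht.trans_le (le_self_pow₀ hθ1 (pow_pos (by omega) j).ne')
  obtain ⟨hS₁, hS₂⟩ := hf.hasSum_fiberwise_fst_and_snd hrows hcols
  exact ⟨hS₁.summable, hS₂.summable, hS₁.tsum_eq.trans hS₂.tsum_eq.symm⟩

/-- For an entire `𝔽_q`-linear series `E(ζ) = ∑ α_j ζ^{q^j}` and any `ω ∈ C`, for every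
`t₀` with `|t₀| < q` the two series `∑_i E(ω/θ^{i+1}) t₀^i` and
`∑_j α_j ω^{q^j}/(θ^{q^j} - t₀)` both converge and have the same sum. -/
theorem anderson_generating_function_partial_fractions
    {C : Type*} [NormedField C] [CompleteSpace C] [IsAlgClosed C] [IsUltrametricDist C]
    (p e : ℕ) (hp : p.Prime) (he : 0 < e) [CharP C p]
    (q : ℕ) (hq : q = p ^ e)
    (θ : C) (hθ : ‖θ‖ = (q : ℝ))
    (α : ℕ → C) (hα0 : α 0 = 1)
    (hdecay : ∀ r : ℝ, 0 < r →
      Filter.Tendsto (fun i : ℕ => ‖α i‖ * r ^ (q ^ i)) Filter.atTop (nhds 0))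
    (E : C → C) (hE : ∀ ζ : C, E ζ = ∑' i : ℕ, α i * ζ ^ q ^ i)
    (ω : C) (t₀ : C) (ht₀ : ‖t₀‖ < (q : ℝ)) :
    Summable (fun i : ℕ => E (ω / θ ^ (i + 1)) * t₀ ^ i) ∧
    Summable (fun j : ℕ => α j * ω ^ q ^ j / (θ ^ q ^ j - t₀)) ∧
    ∑' i : ℕ, E (ω / θ ^ (i + 1)) * t₀ ^ i
      = ∑' j : ℕ, α j * ω ^ q ^ j / (θ ^ q ^ j - t₀) :=
  anderson_generating_function_partial_fractions_general p e hp he q hq θ hθ α hdecay E hE ω t₀ ht₀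
end

section
/- Let e(ζ) = Σ_{i≥0} α_i ζ^{q^i} be an entire 𝔽_q-linear series and let ω ∈ C. For every t₀ ∈ C with t₀ ∉ {θ^{q^j} : j ≥ 0}, the series S(t₀) := Σ_{j≥0} α_j ω^{q^j}/(θ^{q^j} − t₀) converges. Moreover, for every j₀ ≥ 0, the function (t − θ^{q^{j₀}})·S(t) tends to −α_{j₀} ω^{q^{j₀}} as t tends to θ^{q^{j₀}} (along t ∈ C with t ∉ {θ^{q^j} : j ≥ 0}); in other words S has a simple pole at t = θ^{q^{j₀}} with residue −α_{j₀} ω^{q^{j₀}}. -/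
/-!
In an ultrametric field `‖θ^{q^j} - t‖ = ‖θ^{q^j}‖ = q^{q^j}` as soon as `q^{q^j} > ‖t‖`, so the
terms of the series eventually have norm `‖α_j‖ (‖ω‖/q)^{q^j}`, which tends to zero by the decay
of `α`; in a complete nonarchimedean field this already gives summability. Every pole other than
`θ^{q^{j₀}}` lies at distance at least `q^{q^{j₀}}` from it, and by the isosceles property the
other terms keep their norm on the ball of that radius, so the series without its `j₀`-th term
stays bounded near `θ^{q^{j₀}}`. Multiplying by `t - θ^{q^{j₀}}` thus kills everything except
the `j₀`-th term, which contributes exactly `-α_{j₀} ω^{q^{j₀}}`.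
-/

open Filter Topology

section Ultrametric

variable {E : Type*} [SeminormedAddCommGroup E] [IsUltrametricDist E]

theorem norm_sub_eq_of_norm_sub_lt {x y z : E} (h : ‖z - y‖ < ‖x - y‖) :
    ‖x - z‖ = ‖x - y‖ := by
  rw [norm_sub_rev z y] at h
  rw [IsUltrametricDist.norm_sub_eq_max_of_norm_sub_ne_norm_sub x y z h.ne', max_eq_left h.le]

theorem norm_sub_eq_max_of_norm_ne_norm {x y : E} (h : ‖x‖ ≠ ‖y‖) :
    ‖x - y‖ = max ‖x‖ ‖y‖ := by
  rw [sub_eq_add_neg, IsUltrametricDist.norm_add_eq_max_of_norm_ne_norm (by rwa [norm_neg]),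
    norm_neg]

end Ultrametric

theorem tendsto_mul_pow_div_pow_nhds_zero {ι C : Type*} [NormedField C] {l : Filter ι}
    {α : ι → C} {n : ι → ℕ}
    (hdecay : ∀ r : ℝ, 0 < r → Tendsto (fun i => ‖α i‖ * r ^ n i) l (𝓝 0)) (x y : C) :
    Tendsto (fun i => α i * x ^ n i / y ^ n i) l (𝓝 0) := by
  have hr : 0 < max (‖x‖ / ‖y‖) 1 := lt_max_of_lt_right one_pos
  refine squeeze_zero_norm (fun i => ?_) (hdecay _ hr)
  rw [norm_div, norm_mul, mul_div_assoc, norm_pow, norm_pow, ← div_pow]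
  gcongr
  exact le_max_left _ _

section PartialFractions

variable {ι C : Type*} [NormedField C] [IsUltrametricDist C]

theorem summable_div_sub_of_tendsto [CompleteSpace C] {a c : ι → C}
    (hc : Tendsto (fun i => ‖c i‖) cofinite atTop)
    (ha : Tendsto (fun i => a i / c i) cofinite (𝓝 0)) (t : C) :
    Summable fun i => a i / (c i - t) := by
  refine NonarchimedeanAddGroup.summable_of_tendsto_cofinite_zero
    (tendsto_zero_iff_norm_tendsto_zero.mpr ((tendsto_zero_iff_norm_tendsto_zero.mp ha).congr' ?_))
  filter_upwards [hc.eventually_gt_atTop ‖t‖] with i hi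
  rw [norm_div, norm_div, norm_sub_eq_of_norm_sub_lt (y := 0) (by simpa using hi), sub_zero]

theorem tendsto_sub_mul_tsum_div_sub {a c : ι → C} {i₀ : ι} {δ : ℝ} (hδ : 0 < δ)
    (hsep : ∀ i ≠ i₀, δ ≤ ‖c i - c i₀‖) (hsum : ∀ t, Summable fun i => a i / (c i - t)) :
    Tendsto (fun t => (t - c i₀) * ∑' i, a i / (c i - t)) (𝓝[≠] c i₀) (𝓝 (-a i₀)) := by
  classical
  set T : C → C := fun t => ∑' i, if i = i₀ then 0 else a i / (c i - t)
  have hsplit : ∀ t ≠ c i₀, (t - c i₀) * ∑' i, a i / (c i - t) = -a i₀ + (t - c i₀) * T t := by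
    intro t ht
    have hpole : (t - c i₀) * (a i₀ / (c i₀ - t)) = -a i₀ := by
      field_simp [sub_ne_zero.mpr ht.symm]
      ring
    rw [(hsum t).tsum_eq_add_tsum_ite i₀, mul_add, hpole]
  have hnear : ∀ᶠ t in 𝓝[≠] c i₀, ‖t - c i₀‖ < δ :=
    nhdsWithin_le_nhds (eventually_norm_sub_lt (c i₀) hδ)
  obtain ⟨B, hB⟩ := (hsum (c i₀)).tendsto_cofinite_zero.norm.bddAbove_range_of_cofinite
  have hB0 : 0 ≤ B := (norm_nonneg _).trans (hB (Set.mem_range_self i₀))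
  have hbound : ∀ᶠ t in 𝓝[≠] c i₀, ‖T t‖ ≤ B := by
    filter_upwards [hnear] with t ht
    refine IsUltrametricDist.norm_tsum_le_of_forall_le_of_nonneg hB0 fun i => ?_
    split_ifs with hi
    · rwa [norm_zero]
    · rw [norm_div, norm_sub_eq_of_norm_sub_lt (ht.trans_le (hsep i hi)), ← norm_div]
      exact hB (Set.mem_range_self i)
  have hsub : Tendsto (fun t => t - c i₀) (𝓝[≠] c i₀) (𝓝 0) :=
    tendsto_sub_nhds_zero_iff.mpr (tendsto_id.mono_left nhdsWithin_le_nhds)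
  have htail : Tendsto (fun t => (t - c i₀) * T t) (𝓝[≠] c i₀) (𝓝 0) :=
    hsub.zero_mul_isBoundedUnder_le ⟨B, hbound⟩
  rw [← add_zero (-a i₀)]
  refine (tendsto_const_nhds.add htail).congr' ?_
  filter_upwards [self_mem_nhdsWithin] with t ht
  exact (hsplit t ht).symm

end PartialFractions

theorem anderson_generating_function_poles_general
    {C : Type*} [NormedField C] [CompleteSpace C] [IsUltrametricDist C]
    (p e : ℕ) (hp : p.Prime) (he : 0 < e)
    (q : ℕ) (hq : q = p ^ e)
    (θ : C) (hθ : ‖θ‖ = (q : ℝ))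
    (α : ℕ → C)
    (hdecay : ∀ r : ℝ, 0 < r →
      Filter.Tendsto (fun i : ℕ => ‖α i‖ * r ^ (q ^ i)) Filter.atTop (nhds 0))
    (ω : C) :
    (∀ t₀ : C, (∀ j : ℕ, t₀ ≠ θ ^ q ^ j) →
        Summable fun j : ℕ => α j * ω ^ q ^ j / (θ ^ q ^ j - t₀)) ∧
    ∀ j₀ : ℕ,
      Filter.Tendsto
        (fun t : C => (t - θ ^ q ^ j₀) * ∑' j : ℕ, α j * ω ^ q ^ j / (θ ^ q ^ j - t))
        (nhdsWithin (θ ^ q ^ j₀) {t : C | ∀ j : ℕ, t ≠ θ ^ q ^ j})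
        (nhds (-(α j₀ * ω ^ q ^ j₀))) := by
  have hq2 : 2 ≤ q := hq ▸ hp.two_le.trans (Nat.le_self_pow he.ne' p)
  have hq1 : (1 : ℝ) < q := by exact_mod_cast hq2
  have hnorm : ∀ j, ‖θ ^ q ^ j‖ = (q : ℝ) ^ q ^ j := fun j => by rw [norm_pow, hθ]
  have hexp : StrictMono fun j => q ^ j := pow_right_strictMono₀ hq2
  have hmono : StrictMono fun j => ‖θ ^ q ^ j‖ := by
    simp only [hnorm]
    exact (pow_right_strictMono₀ hq1).comp hexp
  have htop : Tendsto (fun j => ‖θ ^ q ^ j‖) cofinite atTop := by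
    simp only [hnorm, Nat.cofinite_eq_atTop]
    exact (tendsto_pow_atTop_atTop_of_one_lt hq1).comp hexp.tendsto_atTop
  have hsum := summable_div_sub_of_tendsto htop
    (Nat.cofinite_eq_atTop ▸ tendsto_mul_pow_div_pow_nhds_zero hdecay ω θ)
  refine ⟨fun t₀ _ => hsum t₀, fun j₀ => ?_⟩
  have hsep : ∀ j ≠ j₀, ‖θ ^ q ^ j₀‖ ≤ ‖θ ^ q ^ j - θ ^ q ^ j₀‖ := fun j hj =>
    (norm_sub_eq_max_of_norm_ne_norm (hmono.injective.ne hj)).symm ▸ le_max_right _ _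
  exact (tendsto_sub_mul_tsum_div_sub (hnorm j₀ ▸ by positivity) hsep hsum).mono_left
    (nhdsWithin_mono _ fun t ht => ht j₀)

/-- For an entire `𝔽_q`-linear series `E(ζ) = ∑ α_j ζ^{q^j}` and any `ω ∈ C`, the series
`S(t₀) = ∑_j α_j ω^{q^j}/(θ^{q^j} - t₀)` converges for every `t₀ ∉ {θ^{q^j} : j ≥ 0}`,
and for every `j₀`, `(t - θ^{q^{j₀}})·S(t) → -α_{j₀} ω^{q^{j₀}}` as `t → θ^{q^{j₀}}`
within the complement of `{θ^{q^j} : j ≥ 0}`; i.e. `S` has a simple pole at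
`t = θ^{q^{j₀}}` with residue `-α_{j₀} ω^{q^{j₀}}`. -/
theorem anderson_generating_function_poles
    {C : Type*} [NormedField C] [CompleteSpace C] [IsAlgClosed C] [IsUltrametricDist C]
    (p e : ℕ) (hp : p.Prime) (he : 0 < e) [CharP C p]
    (q : ℕ) (hq : q = p ^ e)
    (θ : C) (hθ : ‖θ‖ = (q : ℝ))
    (α : ℕ → C) (hα0 : α 0 = 1)
    (hdecay : ∀ r : ℝ, 0 < r →
      Filter.Tendsto (fun i : ℕ => ‖α i‖ * r ^ (q ^ i)) Filter.atTop (nhds 0))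
    (E : C → C) (hE : ∀ ζ : C, E ζ = ∑' i : ℕ, α i * ζ ^ q ^ i)
    (ω : C) :
    (∀ t₀ : C, (∀ j : ℕ, t₀ ≠ θ ^ q ^ j) →
        Summable fun j : ℕ => α j * ω ^ q ^ j / (θ ^ q ^ j - t₀)) ∧
    ∀ j₀ : ℕ,
      Filter.Tendsto
        (fun t : C => (t - θ ^ q ^ j₀) * ∑' j : ℕ, α j * ω ^ q ^ j / (θ ^ q ^ j - t))
        (nhdsWithin (θ ^ q ^ j₀) {t : C | ∀ j : ℕ, t ≠ θ ^ q ^ j})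
        (nhds (-(α j₀ * ω ^ q ^ j₀))) :=
  anderson_generating_function_poles_general p e hp he q hq θ hθ α hdecay ω
end

section
/- For every t₀ ∈ C with |t₀| < q, one has s_C(t₀) = Σ_{i≥0} π̃^{q^i}/(d_i·(θ^{q^i} − t₀)), both series converging. Moreover the series Σ_{i≥0} π̃^{q^i}/(d_i·(θ^{q^i} − t₀)) converges for every t₀ ∈ C with t₀ ∉ {θ^{q^i} : i ≥ 0}, and (t − θ)·Σ_{i≥0} π̃^{q^i}/(d_i·(θ^{q^i} − t)) tends to −π̃ as t tends to θ (along such t₀); i.e. the meromorphic extension of s_C satisfies ((t − θ)·s_C(t))|_{t=θ} = −π̃. -/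
/-- The Carlitz factorials: `d_0 = 1`, `d_i = [i] d_{i-1}^q` with `[i] = θ^{q^i} - θ`. -/
noncomputable def carlitzD {C : Type*} [Field C] (q : ℕ) (θ : C) : ℕ → C
  | 0 => 1
  | i + 1 => (θ ^ q ^ (i + 1) - θ) * carlitzD q θ i ^ q

/-! Writing `e_C(π̃/θ^{i+1}) t^i = ∑_j π̃^{q^j} t^i / (d_j θ^{q^j(i+1)})` and summing over `i`
first turns the double series into `∑_j π̃^{q^j}/(d_j (θ^{q^j} - t))`, each inner sum being
geometric in `t/θ^{q^j}`. The interchange is legitimate because `|d_j θ^{q^j}| = q^{(j+1)q^j}`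
makes the double series absolutely convergent for `|t| < q`. In the ultrametric field
`|θ^{q^j} - t| = |θ^{q^j}|` once `|t| < q^{q^j}`, so the partial-fraction series converges
for every `t`, and near `θ` every term but `π̃/(θ - t)` stays bounded, whence the residue `-π̃`. -/

open Filter Topology

section Geometric

variable {K : Type*} [NormedField K]

lemma tsum_mul_pow_div_pow_succ (b : K) {t Θ : K} (h : ‖t‖ < ‖Θ‖) :
    ∑' i : ℕ, b * t ^ i / Θ ^ (i + 1) = b / (Θ - t) := by
  have hΘ : Θ ≠ 0 := norm_pos_iff.mp ((norm_nonneg t).trans_lt h)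
  have hsub : Θ - t ≠ 0 := sub_ne_zero.mpr fun e => h.ne (by rw [e])
  have hr : ‖t / Θ‖ < 1 := by rwa [norm_div, div_lt_one ((norm_nonneg t).trans_lt h)]
  calc ∑' i : ℕ, b * t ^ i / Θ ^ (i + 1) = b / Θ * ∑' i : ℕ, (t / Θ) ^ i := by
        rw [← tsum_mul_left]
        congr with i
        rw [div_pow, pow_succ]
        field_simp
    _ = b / (Θ - t) := by
        rw [tsum_geometric_of_norm_lt_one hr]
        field_simp

variable [CompleteSpace K] {b Θ : ℕ → K} {t : K} {R : ℝ}

lemma summable_uncurry_mul_pow_div_pow_succ (ht : ‖t‖ < R) (hΘ : ∀ j, R ≤ ‖Θ j‖)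
    (hb : Summable fun j => ‖b j‖ / ‖Θ j‖) :
    Summable (Function.uncurry fun i j => b j * t ^ i / Θ j ^ (i + 1)) := by
  have hR : 0 < R := (norm_nonneg t).trans_lt ht
  refine Summable.of_norm_bounded
    ((summable_geometric_of_lt_one (by positivity) ((div_lt_one hR).mpr ht)).mul_of_nonneg hb
      (fun _ => by positivity) (fun _ => by positivity)) ?_
  rintro ⟨i, j⟩
  calc ‖b j * t ^ i / Θ j ^ (i + 1)‖ = (‖t‖ / ‖Θ j‖) ^ i * (‖b j‖ / ‖Θ j‖) := by
        rw [norm_div, norm_mul, norm_pow, norm_pow, div_pow, pow_succ]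
        ring
    _ ≤ (‖t‖ / R) ^ i * (‖b j‖ / ‖Θ j‖) := by
        gcongr
        exact hΘ j

lemma summable_tsum_mul_pow_div_pow_succ (ht : ‖t‖ < R) (hΘ : ∀ j, R ≤ ‖Θ j‖)
    (hb : Summable fun j => ‖b j‖ / ‖Θ j‖) :
    Summable fun i : ℕ => ∑' j, b j * t ^ i / Θ j ^ (i + 1) :=
  (summable_uncurry_mul_pow_div_pow_succ ht hΘ hb).prod

lemma tsum_tsum_mul_pow_div_pow_succ (ht : ‖t‖ < R) (hΘ : ∀ j, R ≤ ‖Θ j‖)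
    (hb : Summable fun j => ‖b j‖ / ‖Θ j‖) :
    ∑' i : ℕ, ∑' j, b j * t ^ i / Θ j ^ (i + 1) = ∑' j, b j / (Θ j - t) := by
  rw [← (summable_uncurry_mul_pow_div_pow_succ ht hΘ hb).tsum_comm]
  exact tsum_congr fun j => tsum_mul_pow_div_pow_succ (b j) (ht.trans_le (hΘ j))

end Geometric

lemma norm_sub_eq_left_of_norm_lt {G : Type*} [SeminormedAddGroup G] [IsUltrametricDist G]
    {a b : G} (h : ‖b‖ < ‖a‖) : ‖a - b‖ = ‖a‖ := by
  rw [sub_eq_add_neg,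
    IsUltrametricDist.norm_add_eq_max_of_norm_ne_norm (by rw [norm_neg]; exact h.ne'),
    norm_neg, max_eq_left h.le]

section Ultrametric

variable {K : Type*} [NormedField K] [IsUltrametricDist K]

lemma norm_div_sub_eq_of_norm_lt (b : K) {t Θ : K} (h : ‖t‖ < ‖Θ‖) :
    ‖b / (Θ - t)‖ = ‖b‖ / ‖Θ‖ := by
  rw [norm_div, norm_sub_eq_left_of_norm_lt h]

variable [CompleteSpace K] {b Θ : ℕ → K}

lemma summable_div_sub (hb : Summable fun j => ‖b j‖ / ‖Θ j‖) {t : K}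
    (ht : ∀ᶠ j in atTop, ‖t‖ < ‖Θ j‖) : Summable fun j => b j / (Θ j - t) :=
  hb.of_norm_bounded_eventually_nat (ht.mono fun j hj => (norm_div_sub_eq_of_norm_lt (b j) hj).le)

lemma tendsto_sub_mul_tsum_div_sub_s5 (hb : Summable fun j => ‖b j‖ / ‖Θ j‖) {R : ℝ}
    (hR : ‖Θ 0‖ < R) (hΘ : ∀ j, R ≤ ‖Θ (j + 1)‖) :
    Tendsto (fun t => (t - Θ 0) * ∑' j, b j / (Θ j - t)) (𝓝[≠] Θ 0) (𝓝 (-b 0)) := by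
  have hb' : Summable fun j => ‖b (j + 1)‖ / ‖Θ (j + 1)‖ := (summable_nat_add_iff 1).mpr hb
  have hnear : ∀ᶠ t in 𝓝[≠] Θ 0, t ≠ Θ 0 ∧ ‖t‖ < R :=
    (eventually_mem_nhdsWithin.mono fun _ => Set.mem_compl_singleton_iff.mp).and (nhdsWithin_le_nhds
      ((continuous_norm.tendsto (Θ 0)).eventually (gt_mem_nhds hR)))
  have hsplit : ∀ t, t ≠ Θ 0 → ‖t‖ < R → (t - Θ 0) * ∑' j, b j / (Θ j - t)
      = -b 0 + (t - Θ 0) * ∑' j, b (j + 1) / (Θ (j + 1) - t) := by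
    intro t hne ht
    have hs : Summable fun j => b (j + 1) / (Θ (j + 1) - t) :=
      summable_div_sub (b := fun j => b (j + 1)) (Θ := fun j => Θ (j + 1)) hb'
        (Eventually.of_forall fun j => ht.trans_le (hΘ j))
    rw [tsum_eq_zero_add' (f := fun j => b j / (Θ j - t)) hs, mul_add]
    congr 1
    field_simp [sub_ne_zero.mpr hne.symm]
    ring
  have htail : Tendsto (fun t => (t - Θ 0) * ∑' j, b (j + 1) / (Θ (j + 1) - t))
      (𝓝[≠] Θ 0) (𝓝 0) := by
    refine squeeze_zero_norm' (a := fun t => ‖t - Θ 0‖ * ∑' j, ‖b (j + 1)‖ / ‖Θ (j + 1)‖) ?_ ?_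
    · filter_upwards [hnear] with t ⟨_, ht⟩
      rw [norm_mul]
      gcongr
      exact tsum_of_norm_bounded hb'.hasSum fun j =>
        (norm_div_sub_eq_of_norm_lt _ (ht.trans_le (hΘ j))).le
    · refine tendsto_nhdsWithin_of_tendsto_nhds ?_
      simpa using (tendsto_norm_sub_self (Θ 0)).mul_const _
  simpa using (htail.const_add (-b 0)).congr' (hnear.mono fun t ht => (hsplit t ht.1 ht.2).symm)

end Ultrametric

lemma summable_div_pow_succ_pow {q : ℕ} (hq : 2 ≤ q) {r : ℝ} (hr : 0 ≤ r) :
    Summable fun j : ℕ => (r / (q : ℝ) ^ (j + 1)) ^ q ^ j := by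
  have hq1 : (1 : ℝ) < q := by exact_mod_cast hq
  have hsmall : ∀ᶠ j : ℕ in atTop, r / (q : ℝ) ^ (j + 1) ≤ 1 / 2 :=
    ((tendsto_pow_atTop_atTop_of_one_lt hq1).comp (tendsto_add_atTop_nat 1)).eventually_ge_atTop
      (2 * r) |>.mono fun j hj => by
        rw [div_le_iff₀ (by positivity)]
        simp only [Function.comp_apply] at hj
        linarith
  refine summable_geometric_two.of_norm_bounded_eventually_nat (hsmall.mono fun j hj => ?_)
  rw [Real.norm_of_nonneg (by positivity)]
  calc (r / (q : ℝ) ^ (j + 1)) ^ q ^ j ≤ (1 / 2) ^ q ^ j := by gcongr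
    _ ≤ (1 / 2) ^ j := pow_le_pow_of_le_one (by norm_num) (by norm_num) (Nat.lt_pow_self hq).le

section Carlitz

variable {K : Type*} [NormedField K] {q : ℕ} {θ : K}

lemma pow_le_norm_pow_pow (hq : 1 ≤ q) (hθ : ‖θ‖ = q) {n j : ℕ} (h : n ≤ q ^ j) :
    (q : ℝ) ^ n ≤ ‖θ ^ q ^ j‖ := by
  rw [norm_pow, hθ]
  exact pow_le_pow_right₀ (by exact_mod_cast hq) h

lemma tendsto_norm_pow_pow_atTop (hq : 2 ≤ q) (hθ : ‖θ‖ = q) :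
    Tendsto (fun j => ‖θ ^ q ^ j‖) atTop atTop :=
  tendsto_atTop_mono (fun j => pow_le_norm_pow_pow (by omega) hθ (Nat.lt_pow_self hq).le)
    (tendsto_pow_atTop_atTop_of_one_lt (by exact_mod_cast hq))

variable [IsUltrametricDist K]

lemma norm_carlitzD (hq : 2 ≤ q) (hθ : ‖θ‖ = q) (i : ℕ) :
    ‖carlitzD q θ i‖ = (q : ℝ) ^ (i * q ^ i) := by
  induction i with
  | zero => simp [carlitzD]
  | succ i ih =>
    have hlt : ‖θ‖ < ‖θ ^ q ^ (i + 1)‖ := by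
      rw [norm_pow, hθ]
      exact lt_self_pow₀ (by exact_mod_cast hq) (Nat.one_lt_pow (Nat.succ_ne_zero i) hq)
    rw [carlitzD, norm_mul, norm_pow, norm_sub_eq_left_of_norm_lt hlt, norm_pow, hθ, ih,
      ← pow_mul, ← pow_add]
    congr 1
    ring

lemma norm_carlitz_coeff (hq : 2 ≤ q) (hθ : ‖θ‖ = q) (ϖ : K) (j : ℕ) :
    ‖ϖ ^ q ^ j / carlitzD q θ j‖ / ‖θ ^ q ^ j‖ = (‖ϖ‖ / (q : ℝ) ^ (j + 1)) ^ q ^ j := by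
  rw [norm_div, norm_pow, norm_carlitzD hq hθ, norm_pow, hθ, div_div, ← pow_add, div_pow,
    ← pow_mul]
  congr 2
  ring

lemma summable_norm_carlitz_coeff (hq : 2 ≤ q) (hθ : ‖θ‖ = q) (ϖ : K) :
    Summable fun j => ‖ϖ ^ q ^ j / carlitzD q θ j‖ / ‖θ ^ q ^ j‖ := by
  simpa only [norm_carlitz_coeff hq hθ] using summable_div_pow_succ_pow hq (norm_nonneg ϖ)

end Carlitz

theorem carlitz_sC_partial_fractions_and_residue_general
    {C : Type*} [NormedField C] [CompleteSpace C] [IsUltrametricDist C]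
    (p e : ℕ) (hp : p.Prime) (he : 0 < e)
    (q : ℕ) (hq : q = p ^ e)
    (θ : C) (hθ : ‖θ‖ = (q : ℝ))
    (eC : C → C) (heC : ∀ z : C, eC z = ∑' i : ℕ, z ^ q ^ i / carlitzD q θ i)
    (ϖ : C) :
    (∀ t₀ : C, ‖t₀‖ < (q : ℝ) →
        Summable (fun i : ℕ => eC (ϖ / θ ^ (i + 1)) * t₀ ^ i) ∧
        Summable (fun i : ℕ => ϖ ^ q ^ i / (carlitzD q θ i * (θ ^ q ^ i - t₀))) ∧
        ∑' i : ℕ, eC (ϖ / θ ^ (i + 1)) * t₀ ^ i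
          = ∑' i : ℕ, ϖ ^ q ^ i / (carlitzD q θ i * (θ ^ q ^ i - t₀))) ∧
    (∀ t₀ : C, (∀ i : ℕ, t₀ ≠ θ ^ q ^ i) →
        Summable fun i : ℕ => ϖ ^ q ^ i / (carlitzD q θ i * (θ ^ q ^ i - t₀))) ∧
    Filter.Tendsto
      (fun t : C => (t - θ) * ∑' i : ℕ, ϖ ^ q ^ i / (carlitzD q θ i * (θ ^ q ^ i - t)))
      (nhdsWithin θ {t : C | ∀ i : ℕ, t ≠ θ ^ q ^ i})
      (nhds (-ϖ)) := by
  have hq2 : 2 ≤ q := hq ▸ hp.two_le.trans (Nat.le_self_pow he.ne' p)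
  set b : ℕ → C := fun j => ϖ ^ q ^ j / carlitzD q θ j
  set Θ : ℕ → C := fun j => θ ^ q ^ j
  have hb : Summable fun j => ‖b j‖ / ‖Θ j‖ := summable_norm_carlitz_coeff hq2 hθ ϖ
  have hΘ : ∀ t : C, ∀ᶠ j in atTop, ‖t‖ < ‖Θ j‖ := fun t =>
    (tendsto_norm_pow_pow_atTop hq2 hθ).eventually_gt_atTop _
  have hterm : ∀ t j, ϖ ^ q ^ j / (carlitzD q θ j * (θ ^ q ^ j - t)) = b j / (Θ j - t) :=
    fun _ _ => (div_div _ _ _).symm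
  simp_rw [hterm]
  refine ⟨fun t₀ ht₀ => ?_, fun t₀ _ => summable_div_sub hb (hΘ _), ?_⟩
  · have hexp : ∀ i : ℕ, eC (ϖ / θ ^ (i + 1)) * t₀ ^ i = ∑' j, b j * t₀ ^ i / Θ j ^ (i + 1) := by
      intro i
      rw [heC, ← tsum_mul_right]
      refine tsum_congr fun j => ?_
      rw [div_pow, ← pow_mul, ← pow_mul, mul_comm (i + 1)]
      ring
    have hqΘ : ∀ j, (q : ℝ) ≤ ‖Θ j‖ := fun j => (pow_one (q : ℝ)).symm.trans_le
      (pow_le_norm_pow_pow (by omega) hθ (Nat.one_le_pow j q (by omega)))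
    simp_rw [hexp]
    exact ⟨summable_tsum_mul_pow_div_pow_succ ht₀ hqΘ hb, summable_div_sub hb (hΘ _),
      tsum_tsum_mul_pow_div_pow_succ ht₀ hqΘ hb⟩
  · have hres := tendsto_sub_mul_tsum_div_sub_s5 hb (R := (q : ℝ) ^ q)
      (by simpa only [Θ, pow_zero, pow_one, hθ] using lt_self_pow₀ (by exact_mod_cast hq2) hq2)
      (fun j => pow_le_norm_pow_pow (by omega) hθ (Nat.le_self_pow j.succ_ne_zero q))
    have hΘ0 : Θ 0 = θ := by simp [Θ]
    have hb0 : b 0 = ϖ := by simp [b, carlitzD]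
    rw [hΘ0, hb0] at hres
    exact hres.mono_left (nhdsWithin_mono _ fun t ht => by simpa using ht 0)

/-- For `|t₀| < q` one has `s_C(t₀) = ∑_i π̃^{q^i}/(d_i (θ^{q^i} - t₀))`, both series
converging; the right-hand series converges for every `t₀ ∉ {θ^{q^i}}`, and
`(t - θ)·∑_i π̃^{q^i}/(d_i (θ^{q^i} - t)) → -π̃` as `t → θ` along such points. -/
theorem carlitz_sC_partial_fractions_and_residue
    {C : Type*} [NormedField C] [CompleteSpace C] [IsAlgClosed C] [IsUltrametricDist C]
    (p e : ℕ) (hp : p.Prime) (he : 0 < e) [CharP C p]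
    (q : ℕ) (hq : q = p ^ e)
    (θ : C) (hθ : ‖θ‖ = (q : ℝ))
    (eC : C → C) (heC : ∀ z : C, eC z = ∑' i : ℕ, z ^ q ^ i / carlitzD q θ i)
    (ϖ : C) (hϖ : ϖ ≠ 0) (hϖ0 : eC ϖ = 0) :
    (∀ t₀ : C, ‖t₀‖ < (q : ℝ) →
        Summable (fun i : ℕ => eC (ϖ / θ ^ (i + 1)) * t₀ ^ i) ∧
        Summable (fun i : ℕ => ϖ ^ q ^ i / (carlitzD q θ i * (θ ^ q ^ i - t₀))) ∧
        ∑' i : ℕ, eC (ϖ / θ ^ (i + 1)) * t₀ ^ i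
          = ∑' i : ℕ, ϖ ^ q ^ i / (carlitzD q θ i * (θ ^ q ^ i - t₀))) ∧
    (∀ t₀ : C, (∀ i : ℕ, t₀ ≠ θ ^ q ^ i) →
        Summable fun i : ℕ => ϖ ^ q ^ i / (carlitzD q θ i * (θ ^ q ^ i - t₀))) ∧
    Filter.Tendsto
      (fun t : C => (t - θ) * ∑' i : ℕ, ϖ ^ q ^ i / (carlitzD q θ i * (θ ^ q ^ i - t)))
      (nhdsWithin θ {t : C | ∀ i : ℕ, t ≠ θ ^ q ^ i})
      (nhds (-ϖ)) :=
  carlitz_sC_partial_fractions_and_residue_general p e hp he q hq θ hθ eC heC ϖ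
end

section
/- Let e : C → C be additive and 𝔽_q-homogeneous (e(ζ+ζ') = e(ζ)+e(ζ') and e(λζ) = λe(ζ) for all λ ∈ 𝔽_q), and let x ∈ C satisfy e(a·x) = 0 for every a ∈ A. Then for every a ∈ A one has Σ_{i≥0} e(a(θ)·x/θ^{i+1}) t^i = ā(t) · Σ_{i≥0} e(x/θ^{i+1}) t^i as formal power series in C[[t]], where ā(t) ∈ 𝔽_q[t] ⊂ C[[t]] denotes the polynomial a with the variable θ replaced by t. -/
/-!
The generating function `G(y) = ∑ᵢ E(y/θ^{i+1}) tⁱ` is additive in `y`. Since `E(θᵏx) = 0`,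
passing from `θᵏx` to `θ^{k+1}x` kills the constant term and shifts the coefficients by one, so
`G(θᵏx) = tᵏ G(x)`. Homogeneity pulls the coefficients of `a` out of `E`, and additivity then
gives `G(a(θ)x) = ā(t) G(x)`.
-/

open PowerSeries

section AndersonGenFun

variable {K : Type*} [Field K]

def andersonGenFun (E : K →+ K) (θ : K) : K →+ K⟦X⟧ where
  toFun y := mk fun i => E (y / θ ^ (i + 1))
  map_zero' := by ext; simp
  map_add' y z := by ext; simp [add_div]

variable (E : K →+ K) {θ : K}

theorem coeff_andersonGenFun (y : K) (i : ℕ) :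
    coeff i (andersonGenFun E θ y) = E (y / θ ^ (i + 1)) :=
  coeff_mk i fun i => E (y / θ ^ (i + 1))

theorem andersonGenFun_C_mul {c : K} (hc : ∀ y, E (c * y) = c * E y) (y : K) :
    andersonGenFun E θ (c * y) = C c * andersonGenFun E θ y := by
  ext i
  rw [coeff_C_mul, coeff_andersonGenFun, coeff_andersonGenFun, mul_div_assoc, hc]

theorem andersonGenFun_pow_succ_mul (hθ : θ ≠ 0) {x : K} {k : ℕ} (hk : E (θ ^ k * x) = 0) :
    andersonGenFun E θ (θ ^ (k + 1) * x) = X * andersonGenFun E θ (θ ^ k * x) := by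
  ext i
  rcases i with _ | i
  · rw [coeff_zero_X_mul, coeff_andersonGenFun, pow_succ, mul_right_comm, zero_add, pow_one,
      mul_div_cancel_right₀ _ hθ, hk]
  · rw [coeff_succ_X_mul, coeff_andersonGenFun, coeff_andersonGenFun, pow_succ θ (i + 1),
      pow_succ θ k, mul_right_comm, mul_div_mul_right _ _ hθ]

theorem andersonGenFun_pow_mul (hθ : θ ≠ 0) {x : K} (hx : ∀ k : ℕ, E (θ ^ k * x) = 0) (k : ℕ) :
    andersonGenFun E θ (θ ^ k * x) = X ^ k * andersonGenFun E θ x := by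
  induction k with
  | zero => simp
  | succ k ih => rw [andersonGenFun_pow_succ_mul E hθ (hx k), ih, pow_succ', mul_assoc]

theorem andersonGenFun_eval_mul (hθ : θ ≠ 0) {x : K} (hx : ∀ k : ℕ, E (θ ^ k * x) = 0)
    {a : Polynomial K} (ha : ∀ n y, E (a.coeff n * y) = a.coeff n * E y) :
    andersonGenFun E θ (a.eval θ * x) = (a : K⟦X⟧) * andersonGenFun E θ x := by
  conv_lhs => rw [a.as_sum_support_C_mul_X_pow]
  conv_rhs => rw [a.as_sum_support_C_mul_X_pow, ← Polynomial.coeToPowerSeries.ringHom_apply]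
  simp only [Polynomial.eval_finsetSum, Finset.sum_mul, map_sum, map_mul, map_pow, mul_assoc,
    Polynomial.eval_mul, Polynomial.eval_C, Polynomial.eval_pow, Polynomial.eval_X,
    andersonGenFun_C_mul E (ha _), andersonGenFun_pow_mul E hθ hx,
    Polynomial.coeToPowerSeries.ringHom_apply, Polynomial.coe_C, Polynomial.coe_X]

end AndersonGenFun

theorem anderson_generating_function_A_linearity_general
    {C : Type*} [NormedField C]
    (p e : ℕ) (hp : p.Prime)
    (q : ℕ) (hq : q = p ^ e)
    (θ : C) (hθ : ‖θ‖ = (q : ℝ))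
    (E : C → C)
    (hadd : ∀ x y : C, E (x + y) = E x + E y)
    (hhom : ∀ lam x : C, lam ^ q = lam → E (lam * x) = lam * E x)
    (x : C)
    (hx : ∀ a : Polynomial C, (∀ n : ℕ, a.coeff n ^ q = a.coeff n) →
      E (a.eval θ * x) = 0) :
    ∀ a : Polynomial C, (∀ n : ℕ, a.coeff n ^ q = a.coeff n) →
      (PowerSeries.mk fun i => E (a.eval θ * x / θ ^ (i + 1)))
        = (a : PowerSeries C) * PowerSeries.mk fun i => E (x / θ ^ (i + 1)) := by
  intro a ha
  have hq0 : q ≠ 0 := hq ▸ pow_ne_zero e hp.ne_zero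
  have hθ0 : θ ≠ 0 := norm_ne_zero_iff.mp (hθ ▸ Nat.cast_ne_zero.mpr hq0)
  have hmonomial (k : ℕ) : E (θ ^ k * x) = 0 := by
    simpa using hx (Polynomial.X ^ k) fun n => by
      rw [Polynomial.coeff_X_pow]; split_ifs <;> simp [hq0]
  exact andersonGenFun_eval_mul (AddMonoidHom.mk' E hadd) hθ0 hmonomial
    fun n y => hhom _ _ (ha n)

/-- Let `E : C → C` be additive and `𝔽_q`-homogeneous (with `𝔽_q` identified with
`{λ : C | λ^q = λ}`), and let `x ∈ C` satisfy `E(a·x) = 0` for every `a ∈ A = 𝔽_q[θ]`.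
Then for every such `a`, `∑_i E(a(θ)x/θ^{i+1}) t^i = ā(t) · ∑_i E(x/θ^{i+1}) t^i` in
`C[[t]]`, where `ā(t)` is the polynomial `a` with `θ` replaced by `t`. -/
theorem anderson_generating_function_A_linearity
    {C : Type*} [NormedField C] [CompleteSpace C] [IsAlgClosed C] [IsUltrametricDist C]
    (p e : ℕ) (hp : p.Prime) (he : 0 < e) [CharP C p]
    (q : ℕ) (hq : q = p ^ e)
    (θ : C) (hθ : ‖θ‖ = (q : ℝ))
    (E : C → C)
    (hadd : ∀ x y : C, E (x + y) = E x + E y)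
    (hhom : ∀ lam x : C, lam ^ q = lam → E (lam * x) = lam * E x)
    (x : C)
    (hx : ∀ a : Polynomial C, (∀ n : ℕ, a.coeff n ^ q = a.coeff n) →
      E (a.eval θ * x) = 0) :
    ∀ a : Polynomial C, (∀ n : ℕ, a.coeff n ^ q = a.coeff n) →
      (PowerSeries.mk fun i => E (a.eval θ * x / θ ^ (i + 1)))
        = (a : PowerSeries C) * PowerSeries.mk fun i => E (x / θ ^ (i + 1)) :=
  anderson_generating_function_A_linearity_general p e hp q hq θ hθ E hadd hhom x hx
end

section
/- Let z ∈ C \ K_∞ and let e : C → C be additive and 𝔽_q-homogeneous with e(λ) = 0 for every λ ∈ Λ_z = A + Az. Let γ = (a b; c d) be a matrix with entries in A and det γ ∈ 𝔽_q^×. Then cz + d ≠ 0; set w := (az+b)/(cz+d) and e_w(ζ) := (cz+d)^{−1}·e((cz+d)·ζ). Define s_1(z,t) := Σ_{i≥0} e(z/θ^{i+1}) t^i, s_2(z,t) := Σ_{i≥0} e(1/θ^{i+1}) t^i, s_1(w,t) := Σ_{i≥0} e_w(w/θ^{i+1}) t^i, s_2(w,t) := Σ_{i≥0} e_w(1/θ^{i+1})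 t^i. Then in C[[t]]: s_1(w,t) = (cz+d)^{−1}·(ā(t)·s_1(z,t) + b̄(t)·s_2(z,t)) and s_2(w,t) = (cz+d)^{−1}·(c̄(t)·s_1(z,t) + d̄(t)·s_2(z,t)). -/
/-!
Since `E` is `𝔽_q`-linear and kills the lattice, multiplying `ζ` by `θ` shifts the generating
series `s_ζ(t) = ∑ᵢ E(ζ/θ^(i+1)) tⁱ` by one place, the lost constant term being `E ζ = 0` when
`ζ ∈ Λ_z`; hence `s_{a ζ}(t) = ā(t) s_ζ(t)` for `a ∈ A`. Because
`(cz+d) w = az+b`, the series attached to `e_w` at `w` and `1` are `(cz+d)⁻¹ s_{az+b}` and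
`(cz+d)⁻¹ s_{cz+d}`, and `cz+d ≠ 0` since `z ∉ K_∞` and `det γ ≠ 0`.
-/

open Polynomial Finset

section GeneratingSeries

variable {C : Type*} [Field C]

/-- The paper's `s_1(z,t)` and `s_2(z,t)` are `genSeries E θ z` and `genSeries E θ 1`. -/
def genSeries (E : C →+ C) (θ : C) : C →+ PowerSeries C where
  toFun ζ := PowerSeries.mk fun i => E (ζ / θ ^ (i + 1))
  map_zero' := by ext; simp
  map_add' x y := by ext; simp [add_div]

variable (E : C →+ C) {θ : C}

lemma genSeries_mul_of_map_mul {c : C} (hc : ∀ x, E (c * x) = c * E x) (ζ : C) :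
    genSeries E θ (c * ζ) = PowerSeries.C c * genSeries E θ ζ := by
  ext i
  simp [genSeries, mul_div_assoc, hc]

lemma genSeries_theta_mul (hθ : θ ≠ 0) {ζ : C} (hζ : E ζ = 0) :
    genSeries E θ (θ * ζ) = PowerSeries.X * genSeries E θ ζ := by
  ext (_ | i)
  · simp [genSeries, hζ, mul_div_cancel_left₀ _ hθ]
  · rw [PowerSeries.coeff_succ_X_mul]
    simp only [genSeries, AddMonoidHom.coe_mk, ZeroHom.coe_mk, PowerSeries.coeff_mk]
    rw [pow_succ' θ (i + 1), mul_div_mul_left _ _ hθ]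

lemma genSeries_theta_pow_mul (hθ : θ ≠ 0) {ζ : C} (hζ : ∀ k, E (θ ^ k * ζ) = 0) (k : ℕ) :
    genSeries E θ (θ ^ k * ζ) = PowerSeries.X ^ k * genSeries E θ ζ := by
  induction k with
  | zero => simp
  | succ k ih => rw [pow_succ', mul_assoc, genSeries_theta_mul E hθ (hζ k), ih, pow_succ', mul_assoc]

lemma genSeries_eval_mul (hθ : θ ≠ 0) {a : C[X]}
    (ha : ∀ n x, E (a.coeff n * x) = a.coeff n * E x) {ζ : C} (hζ : ∀ k, E (θ ^ k * ζ) = 0) :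
    genSeries E θ (a.eval θ * ζ) = (a : PowerSeries C) * genSeries E θ ζ := by
  conv_lhs => rw [eval_eq_sum_range, sum_mul, map_sum]
  conv_rhs =>
    rw [as_sum_range_C_mul_X_pow a, ← coeToPowerSeries.ringHom_apply, map_sum, sum_mul]
  refine sum_congr rfl fun k _ => ?_
  rw [coeToPowerSeries.ringHom_apply, Polynomial.coe_mul, Polynomial.coe_C, Polynomial.coe_pow,
    Polynomial.coe_X, mul_assoc, genSeries_mul_of_map_mul E (ha k),
    genSeries_theta_pow_mul E hθ hζ, mul_assoc]

lemma mk_inv_mul_map_mul_eq_C_inv_mul_genSeries (v y : C) :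
    (PowerSeries.mk fun i => v⁻¹ * E (v * (y / θ ^ (i + 1))))
      = PowerSeries.C v⁻¹ * genSeries E θ (v * y) := by
  ext i
  simp [genSeries, mul_div_assoc]

end GeneratingSeries

lemma Polynomial.eval_mem_of_coeff_mem {R S : Type*} [CommSemiring R] [SetLike S R]
    [SubsemiringClass S R] {s : S} {x : R} (hx : x ∈ s) {f : R[X]} (hf : ∀ n, f.coeff n ∈ s) :
    f.eval x ∈ s := by
  rw [eval_eq_sum_range]
  exact sum_mem fun n _ => mul_mem (hf n) (pow_mem hx n)

lemma mul_add_ne_zero_of_notMem {K : Type*} [Field K] {s : Subfield K} {z x y : K}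
    (hz : z ∉ s) (hx : x ∈ s) (hy : y ∈ s) (hxy : x ≠ 0 ∨ y ≠ 0) : x * z + y ≠ 0 := by
  intro h
  rcases eq_or_ne x 0 with rfl | hx0
  · simp_all
  · have hzxy : z = -y / x := by field_simp; linear_combination h
    exact hz (hzxy ▸ div_mem (neg_mem hy) hx)

lemma coeff_X_pow_pow_eq_self {R : Type*} [Semiring R] {q : ℕ} (hq : q ≠ 0) (k n : ℕ) :
    (X ^ k : R[X]).coeff n ^ q = (X ^ k : R[X]).coeff n := by
  rw [coeff_X_pow]
  split_ifs
  exacts [one_pow q, zero_pow hq]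

theorem s1_s2_transformation_general
    {C : Type*} [NormedField C]
    (p e : ℕ) (hp : p.Prime)
    (q : ℕ) (hq : q = p ^ e)
    (θ : C) (hθ : ‖θ‖ = (q : ℝ))
    (Kinf : Subfield C) (hθK : θ ∈ Kinf) (hFqK : ∀ c : C, c ^ q = c → c ∈ Kinf)
    (z : C) (hz : z ∉ Kinf)
    (E : C → C)
    (hadd : ∀ x y : C, E (x + y) = E x + E y)
    (hhom : ∀ lam x : C, lam ^ q = lam → E (lam * x) = lam * E x)
    (hlat : ∀ a b : Polynomial C, (∀ n : ℕ, a.coeff n ^ q = a.coeff n) →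
      (∀ n : ℕ, b.coeff n ^ q = b.coeff n) → E (a.eval θ + b.eval θ * z) = 0)
    (a b c d : Polynomial C)
    (ha : ∀ n : ℕ, a.coeff n ^ q = a.coeff n)
    (hb : ∀ n : ℕ, b.coeff n ^ q = b.coeff n)
    (hc : ∀ n : ℕ, c.coeff n ^ q = c.coeff n)
    (hd : ∀ n : ℕ, d.coeff n ^ q = d.coeff n)
    (u : C) (hu0 : u ≠ 0)
    (hdet : a * d - b * c = Polynomial.C u) :
    c.eval θ * z + d.eval θ ≠ 0 ∧
    (PowerSeries.mk fun i =>
        (c.eval θ * z + d.eval θ)⁻¹ *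
          E ((c.eval θ * z + d.eval θ) *
            ((a.eval θ * z + b.eval θ) / (c.eval θ * z + d.eval θ) / θ ^ (i + 1))))
      = PowerSeries.C (c.eval θ * z + d.eval θ)⁻¹ *
          ((a : PowerSeries C) * (PowerSeries.mk fun i => E (z / θ ^ (i + 1)))
            + (b : PowerSeries C) * PowerSeries.mk fun i => E (1 / θ ^ (i + 1))) ∧
    (PowerSeries.mk fun i =>
        (c.eval θ * z + d.eval θ)⁻¹ *
          E ((c.eval θ * z + d.eval θ) * (1 / θ ^ (i + 1))))
      = PowerSeries.C (c.eval θ * z + d.eval θ)⁻¹ *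
          ((c : PowerSeries C) * (PowerSeries.mk fun i => E (z / θ ^ (i + 1)))
            + (d : PowerSeries C) * PowerSeries.mk fun i => E (1 / θ ^ (i + 1))) := by
  have hq0 : q ≠ 0 := hq ▸ pow_ne_zero e hp.ne_zero
  have hθ0 : θ ≠ 0 := norm_ne_zero_iff.mp (hθ ▸ Nat.cast_ne_zero.mpr hq0)
  have hzero : ∀ n, (0 : C[X]).coeff n ^ q = (0 : C[X]).coeff n := fun n => by simp [hq0]
  have hvan_z : ∀ k, E (θ ^ k * z) = 0 := fun k => by
    simpa using hlat 0 (X ^ k) hzero (coeff_X_pow_pow_eq_self hq0 k)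
  have hvan_one : ∀ k, E (θ ^ k * 1) = 0 := fun k => by
    simpa using hlat (X ^ k) 0 (coeff_X_pow_pow_eq_self hq0 k) hzero
  have hcd : c.eval θ ≠ 0 ∨ d.eval θ ≠ 0 := by
    by_contra! h
    exact hu0 (by simpa [h.1, h.2] using (congrArg (eval θ) hdet).symm)
  have hinK : ∀ f : C[X], (∀ n, f.coeff n ^ q = f.coeff n) → f.eval θ ∈ Kinf :=
    fun f hf => eval_mem_of_coeff_mem hθK fun n => hFqK _ (hf n)
  have hden := mul_add_ne_zero_of_notMem hz (hinK c hc) (hinK d hd) hcd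
  set Eh := AddMonoidHom.mk' E hadd
  have hs_eval_mul : ∀ f : C[X], (∀ n, f.coeff n ^ q = f.coeff n) →
      ∀ ζ, (∀ k, E (θ ^ k * ζ) = 0) →
      genSeries Eh θ (f.eval θ * ζ) = f * genSeries Eh θ ζ :=
    fun f hf ζ hζ => genSeries_eval_mul Eh hθ0 (fun n x => hhom _ x (hf n)) hζ
  have hs_eval : ∀ f : C[X], (∀ n, f.coeff n ^ q = f.coeff n) →
      genSeries Eh θ (f.eval θ) = f * genSeries Eh θ 1 :=
    fun f hf => by simpa using hs_eval_mul f hf 1 hvan_one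
  refine ⟨hden, (mk_inv_mul_map_mul_eq_C_inv_mul_genSeries Eh _ _).trans ?_,
    (mk_inv_mul_map_mul_eq_C_inv_mul_genSeries Eh _ _).trans ?_⟩
  · rw [mul_div_cancel₀ _ hden, map_add, hs_eval_mul a ha z hvan_z, hs_eval b hb]
    rfl
  · rw [mul_one, map_add, hs_eval_mul c hc z hvan_z, hs_eval d hd]
    rfl

/-- Transformation of the Anderson generating functions `s_1`, `s_2` under a matrix
`γ = (a b; c d)` with entries in `A = 𝔽_q[θ]` and determinant in `𝔽_q^×` (with `𝔽_q`
identified with `{c : C | c^q = c}`): writing `w = (az+b)/(cz+d)` and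
`e_w(ζ) = (cz+d)⁻¹ E((cz+d)ζ)`, one has `cz+d ≠ 0`,
`s_1(w,t) = (cz+d)⁻¹ (ā(t) s_1(z,t) + b̄(t) s_2(z,t))` and
`s_2(w,t) = (cz+d)⁻¹ (c̄(t) s_1(z,t) + d̄(t) s_2(z,t))` in `C[[t]]`. -/
theorem s1_s2_transformation
    {C : Type*} [NormedField C] [CompleteSpace C] [IsAlgClosed C] [IsUltrametricDist C]
    (p e : ℕ) (hp : p.Prime) (he : 0 < e) [CharP C p]
    (q : ℕ) (hq : q = p ^ e)
    (θ : C) (hθ : ‖θ‖ = (q : ℝ))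
    (Kinf : Subfield C) (hθK : θ ∈ Kinf) (hFqK : ∀ c : C, c ^ q = c → c ∈ Kinf)
    (z : C) (hz : z ∉ Kinf)
    (E : C → C)
    (hadd : ∀ x y : C, E (x + y) = E x + E y)
    (hhom : ∀ lam x : C, lam ^ q = lam → E (lam * x) = lam * E x)
    (hlat : ∀ a b : Polynomial C, (∀ n : ℕ, a.coeff n ^ q = a.coeff n) →
      (∀ n : ℕ, b.coeff n ^ q = b.coeff n) → E (a.eval θ + b.eval θ * z) = 0)
    (a b c d : Polynomial C)
    (ha : ∀ n : ℕ, a.coeff n ^ q = a.coeff n)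
    (hb : ∀ n : ℕ, b.coeff n ^ q = b.coeff n)
    (hc : ∀ n : ℕ, c.coeff n ^ q = c.coeff n)
    (hd : ∀ n : ℕ, d.coeff n ^ q = d.coeff n)
    (u : C) (hu : u ^ q = u) (hu0 : u ≠ 0)
    (hdet : a * d - b * c = Polynomial.C u) :
    c.eval θ * z + d.eval θ ≠ 0 ∧
    (PowerSeries.mk fun i =>
        (c.eval θ * z + d.eval θ)⁻¹ *
          E ((c.eval θ * z + d.eval θ) *
            ((a.eval θ * z + b.eval θ) / (c.eval θ * z + d.eval θ) / θ ^ (i + 1))))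
      = PowerSeries.C (c.eval θ * z + d.eval θ)⁻¹ *
          ((a : PowerSeries C) * (PowerSeries.mk fun i => E (z / θ ^ (i + 1)))
            + (b : PowerSeries C) * PowerSeries.mk fun i => E (1 / θ ^ (i + 1))) ∧
    (PowerSeries.mk fun i =>
        (c.eval θ * z + d.eval θ)⁻¹ *
          E ((c.eval θ * z + d.eval θ) * (1 / θ ^ (i + 1))))
      = PowerSeries.C (c.eval θ * z + d.eval θ)⁻¹ *
          ((c : PowerSeries C) * (PowerSeries.mk fun i => E (z / θ ^ (i + 1)))
            + (d : PowerSeries C) * PowerSeries.mk fun i => E (1 / θ ^ (i + 1))) :=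
  s1_s2_transformation_general p e hp q hq θ hθ Kinf hθK hFqK z hz E hadd hhom hlat a b c d ha hb hc
    hd u hu0 hdet
end

section
/- Let z ∈ C \ K_∞ and let e(ζ) = Σ_{i≥0} α_i ζ^{q^i} be an entire 𝔽_q-linear series whose zero set is exactly Λ_z = A + Az. For δ ∈ GL₂(A) (entries in A, determinant in 𝔽_q^×) write J_δ(z) := c_δ z + d_δ and δ(z) := (a_δ z + b_δ)/(c_δ z + d_δ), and define e_{δ(z)}(ζ) := J_δ(z)^{−1}·e(J_δ(z)·ζ), s_1(δ(z),t) := Σ_{i≥0} e_{δ(z)}(δ(z)/θ^{i+1}) t^i, s_2(δ(z),t) := Σ_{i≥0} e_{δ(z)}(1/θ^{i+1}) t^i (these s_2 series are units of C[[t]]), 𝐳(δ(z)) := s_1(δ(z),t)/s_2(δ(z),t) ∈ C[[t]], and for γ ∈ GL₂(A), 𝐉_γ(δ(z)) := c̄_γ(t)·𝐳(δ(z)) + d̄_γ(t). Then for all γ, δ ∈ GL₂(A) one has the cocycle identity 𝐉_{γδ}(z) = 𝐉_γ(δ(z))·𝐉_δ(z) in C[[t]]. -/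
/-- `s_1(z,t) = ∑ E(z/θ^{i+1}) t^i` for an exponential `E`. -/
noncomputable def s1Ser {C : Type*} [Field C] (E : C → C) (θ z : C) : PowerSeries C :=
  PowerSeries.mk fun i => E (z / θ ^ (i + 1))

/-- `s_2(z,t) = ∑ E(1/θ^{i+1}) t^i` for an exponential `E`. -/
noncomputable def s2Ser {C : Type*} [Field C] (E : C → C) (θ : C) : PowerSeries C :=
  PowerSeries.mk fun i => E (1 / θ ^ (i + 1))

/-- `𝐳 = s_1/s_2 ∈ C[[t]]`. -/
noncomputable def zSer {C : Type*} [Field C] (E : C → C) (θ z : C) : PowerSeries C :=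
  s1Ser E θ z * (s2Ser E θ)⁻¹

/-- The deformed factor of automorphy `𝐉_γ = c̄_γ(t)·𝐳 + d̄_γ(t)`, for a matrix with
lower row `(cp, dp)` (polynomials over `A`, substituted at `t`). -/
noncomputable def JSer {C : Type*} [Field C] (cp dp : Polynomial C) (E : C → C)
    (θ z : C) : PowerSeries C :=
  (cp : PowerSeries C) * zSer E θ z + (dp : PowerSeries C)

/-- The renormalized exponential `e_{δ(z)}(ζ) = J_δ(z)⁻¹ E(J_δ(z) ζ)`. -/
noncomputable def expTw {C : Type*} [Field C] (E : C → C) (j : C) : C → C :=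
  fun ζ => j⁻¹ * E (j * ζ)

/-!
The series `s₁(x) = ∑ E(x/θ^{i+1}) tⁱ` is additive in `x`, and because `E` vanishes on
`Λ = A + Az`, multiplying `x ∈ Λ` by `θ` multiplies `s₁(x)` by `t`; hence `ā(t)·s₁(x) = s₁(a(θ)x)`
for `a ∈ A`, and `c̄𝐳 + d̄ = s₁(cz + d)/s₂`. The renormalized exponential only rescales the
series, so `𝐳(δz) = s₁(a_δ z + b_δ)/s₁(c_δ z + d_δ)`, i.e. `𝐳(δz)·𝐉_δ(z) = ā_δ𝐳 + b̄_δ`: the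
deformed `𝐳` transforms under `δ̄` as `z` does under `δ`, and the cocycle identity becomes the
same formal computation as for `cz + d`.

What remains is that `s₂` and `s₁(J_δ(z))` are units, i.e. `1/θ, J_δ(z)/θ ∉ Λ`. This holds since
`1, z` are `A`-linearly independent (`z ∉ K_∞`, and `|a(θ)| = q^{deg a}` for `a ∈ A \ {0}`) and
`(c_δ(0), d_δ(0)) ≠ 0` because `δ` is invertible.
-/

open Filter Topology

section LinearSeries

variable {C : Type*} [NormedField C]

theorem summable_mul_pow_pow_of_tendsto_s11 [CompleteSpace C] [IsUltrametricDist C] {q : ℕ}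
    {α : ℕ → C} (hα : ∀ r : ℝ, 0 < r → Tendsto (fun i => ‖α i‖ * r ^ q ^ i) atTop (𝓝 0))
    (x : C) : Summable fun i => α i * x ^ q ^ i := by
  refine NonarchimedeanAddGroup.summable_of_tendsto_cofinite_zero ?_
  rw [Nat.cofinite_eq_atTop]
  refine squeeze_zero_norm (fun i => ?_) (hα (‖x‖ + 1) (by positivity))
  rw [norm_mul, norm_pow]
  gcongr
  linarith

theorem tsum_mul_add_pow_pow {p : ℕ} [ExpChar C p] (e : ℕ) {α : ℕ → C}
    (hα : ∀ x, Summable fun i => α i * x ^ (p ^ e) ^ i) (x y : C) :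
    ∑' i, α i * (x + y) ^ (p ^ e) ^ i
      = ∑' i, α i * x ^ (p ^ e) ^ i + ∑' i, α i * y ^ (p ^ e) ^ i := by
  rw [← (hα x).tsum_add (hα y)]
  congr 1 with i
  rw [← pow_mul, add_pow_expChar_pow, mul_add]

theorem pow_pow_eq_self_of_pow_eq_self {R : Type*} [Monoid R] {q : ℕ} {c : R} (hc : c ^ q = c)
    (i : ℕ) : c ^ q ^ i = c := by
  induction i with
  | zero => simp
  | succ i ih => rw [pow_succ, pow_mul, ih, hc]

theorem tsum_mul_mul_pow_pow_of_pow_eq_self {q : ℕ} (α : ℕ → C) {c : C} (hc : c ^ q = c)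
    (x : C) : ∑' i, α i * (c * x) ^ q ^ i = c * ∑' i, α i * x ^ q ^ i := by
  rw [← tsum_mul_left]
  congr 1 with i
  rw [mul_pow, pow_pow_eq_self_of_pow_eq_self hc]
  ring

end LinearSeries

section Ultrametric

variable {C : Type*} [NormedField C]

theorem norm_eq_one_of_pow_eq_self {q : ℕ} (hq : 1 < q) {c : C} (hc : c ^ q = c) (hc0 : c ≠ 0) :
    ‖c‖ = 1 := by
  have h : c ^ (q - 1) = 1 :=
    mul_right_cancel₀ hc0 (by rw [← pow_succ, Nat.sub_add_cancel hq.le, hc, one_mul])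
  rw [← pow_eq_one_iff_of_nonneg (norm_nonneg c) (by omega : q - 1 ≠ 0), ← norm_pow, h, norm_one]

theorem Polynomial.norm_eval_of_norm_coeff_le_one [IsUltrametricDist C] {θ : C} (hθ : 1 < ‖θ‖)
    {b : Polynomial C} (hb : ∀ n, ‖b.coeff n‖ ≤ 1) (hlead : ‖b.leadingCoeff‖ = 1) :
    ‖b.eval θ‖ = ‖θ‖ ^ b.natDegree := by
  have hθ0 : 0 < ‖θ‖ := by linarith
  have hlead' : ‖b.coeff b.natDegree * θ ^ b.natDegree‖ = ‖θ‖ ^ b.natDegree := by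
    rw [norm_mul, norm_pow, coeff_natDegree, hlead, one_mul]
  have hlow : ‖∑ k ∈ Finset.range b.natDegree, b.coeff k * θ ^ k‖ < ‖θ‖ ^ b.natDegree := by
    refine lt_of_le_of_lt (IsUltrametricDist.norm_sum_le_of_forall_le_of_nonneg
      (by positivity : 0 ≤ ‖θ‖ ^ b.natDegree / ‖θ‖) fun k hk => ?_) (div_lt_self (by positivity) hθ)
    calc ‖b.coeff k * θ ^ k‖ ≤ ‖θ‖ ^ k := by
          rw [norm_mul, norm_pow]; exact mul_le_of_le_one_left (by positivity) (hb k)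
      _ ≤ ‖θ‖ ^ b.natDegree / ‖θ‖ := by
          rw [le_div_iff₀ hθ0, ← pow_succ]
          exact pow_le_pow_right₀ hθ.le (Finset.mem_range.1 hk)
  rw [eval_eq_sum_range, Finset.sum_range_succ,
    IsUltrametricDist.norm_add_eq_max_of_norm_ne_norm (by rw [hlead']; exact hlow.ne), hlead',
    max_eq_right hlow.le]

theorem Polynomial.eval_mem_of_coeff_mem_s11 {S : Type*} [SetLike S C] [SubringClass S C] {K : S}
    {θ : C} (hθ : θ ∈ K) {b : Polynomial C} (hb : ∀ n, b.coeff n ∈ K) : b.eval θ ∈ K := by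
  rw [eval_eq_sum_range]
  exact sum_mem fun k _ => mul_mem (hb k) (pow_mem hθ k)

end Ultrametric

section FqPolynomials

-- `A = 𝔽_q[θ]` before evaluation at `θ`, and the lattice `Λ_z = A + Az`.
noncomputable def fqPolynomials (C : Type*) [CommRing C] (p e : ℕ) [ExpChar C p] :
    Subring (Polynomial C) :=
  (Polynomial.mapRingHom (iterateFrobenius C p e)).eqLocus (RingHom.id _)

def fqLattice (C : Type*) [CommRing C] (p e : ℕ) [ExpChar C p] (θ z : C) : Set C :=
  {x | ∃ a ∈ fqPolynomials C p e, ∃ b ∈ fqPolynomials C p e, x = a.eval θ + b.eval θ * z}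

variable {C : Type*} [CommRing C] {p : ℕ} [ExpChar C p] {e : ℕ}

theorem mem_fqPolynomials {b : Polynomial C} :
    b ∈ fqPolynomials C p e ↔ ∀ n, b.coeff n ^ p ^ e = b.coeff n := by
  simp [fqPolynomials, RingHom.mem_eqLocus, Polynomial.ext_iff, iterateFrobenius_def]

theorem X_mem_fqPolynomials : Polynomial.X ∈ fqPolynomials C p e := by
  simp [fqPolynomials, RingHom.mem_eqLocus]

variable {θ z : C}

theorem eval_mul_add_eval_mem_fqLattice {c d : Polynomial C} (hc : c ∈ fqPolynomials C p e)
    (hd : d ∈ fqPolynomials C p e) : c.eval θ * z + d.eval θ ∈ fqLattice C p e θ z :=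
  ⟨d, hd, c, hc, add_comm _ _⟩

theorem pow_mul_mem_fqLattice {x : C} (hx : x ∈ fqLattice C p e θ z) (m : ℕ) :
    θ ^ m * x ∈ fqLattice C p e θ z := by
  obtain ⟨a, ha, b, hb, rfl⟩ := hx
  have hXm : Polynomial.X ^ m ∈ fqPolynomials C p e := pow_mem X_mem_fqPolynomials m
  refine ⟨_, mul_mem hXm ha, _, mul_mem hXm hb, ?_⟩
  simp only [Polynomial.eval_mul, Polynomial.eval_pow, Polynomial.eval_X]
  ring

end FqPolynomials

section Independence

variable {C : Type*} [NormedField C] [IsUltrametricDist C] {p : ℕ} [ExpChar C p] {e : ℕ}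
  {θ : C}

theorem eval_ne_zero_of_mem_fqPolynomials (hq : 1 < p ^ e) (hθ : 1 < ‖θ‖) {b : Polynomial C}
    (hb : b ∈ fqPolynomials C p e) (hb0 : b ≠ 0) : b.eval θ ≠ 0 := by
  have hnorm (n : ℕ) (hn : b.coeff n ≠ 0) : ‖b.coeff n‖ = 1 :=
    norm_eq_one_of_pow_eq_self hq (mem_fqPolynomials.1 hb n) hn
  have hle (n : ℕ) : ‖b.coeff n‖ ≤ 1 := by
    by_cases hn : b.coeff n = 0
    · simp [hn]
    · exact (hnorm n hn).le
  rw [← norm_ne_zero_iff, Polynomial.norm_eval_of_norm_coeff_le_one hθ hle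
    (hnorm _ (Polynomial.leadingCoeff_ne_zero.2 hb0))]
  positivity

theorem eq_zero_of_eval_add_eval_mul_eq_zero (hq : 1 < p ^ e) (hθ : 1 < ‖θ‖) {K : Subfield C}
    (hθK : θ ∈ K) (hFqK : ∀ c : C, c ^ p ^ e = c → c ∈ K) {z : C} (hz : z ∉ K)
    {a b : Polynomial C} (ha : a ∈ fqPolynomials C p e) (hb : b ∈ fqPolynomials C p e)
    (h : a.eval θ + b.eval θ * z = 0) : a = 0 ∧ b = 0 := by
  have hK {f : Polynomial C} (hf : f ∈ fqPolynomials C p e) : f.eval θ ∈ K :=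
    Polynomial.eval_mem_of_coeff_mem_s11 hθK fun n => hFqK _ (mem_fqPolynomials.1 hf n)
  have hb0 : b = 0 := by
    by_contra hb0
    have hbθ := eval_ne_zero_of_mem_fqPolynomials hq hθ hb hb0
    have hzK : z = -a.eval θ / b.eval θ := by
      field_simp
      linear_combination h
    exact hz (hzK ▸ div_mem (neg_mem (hK ha)) (hK hb))
  subst hb0
  refine ⟨by_contra fun ha0 => eval_ne_zero_of_mem_fqPolynomials hq hθ ha ha0 ?_, rfl⟩
  simpa using h

end Independence

section Lattice

variable {C : Type*} [Field C] {p : ℕ} [ExpChar C p] {e : ℕ} {θ z : C}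

theorem div_notMem_fqLattice (hθ : θ ≠ 0)
    (hindep : ∀ a ∈ fqPolynomials C p e, ∀ b ∈ fqPolynomials C p e,
      a.eval θ + b.eval θ * z = 0 → a = 0 ∧ b = 0)
    {c d : Polynomial C} (hc : c ∈ fqPolynomials C p e) (hd : d ∈ fqPolynomials C p e)
    (h0 : c.coeff 0 ≠ 0 ∨ d.coeff 0 ≠ 0) :
    (c.eval θ * z + d.eval θ) / θ ∉ fqLattice C p e θ z := by
  rintro ⟨a, ha, b, hb, hab⟩
  rw [div_eq_iff hθ] at hab
  obtain ⟨hda, hcb⟩ := hindep (d - Polynomial.X * a)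
    (sub_mem hd (mul_mem X_mem_fqPolynomials ha)) (c - Polynomial.X * b)
    (sub_mem hc (mul_mem X_mem_fqPolynomials hb)) (by
      simp only [Polynomial.eval_sub, Polynomial.eval_mul, Polynomial.eval_X]
      linear_combination hab)
  rw [sub_eq_zero] at hda hcb
  rcases h0 with h0 | h0
  · exact h0 (by simp [hcb])
  · exact h0 (by simp [hda])

end Lattice

section DeformationSeries

variable {C : Type*} [Field C] {θ : C}

theorem s1Ser_expTw (E : C → C) {j : C} (hj : j ≠ 0) (w : C) :
    s1Ser (expTw E j) θ (w / j) = PowerSeries.C j⁻¹ * s1Ser E θ w := by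
  ext n
  simp only [s1Ser, expTw, PowerSeries.coeff_mk, PowerSeries.coeff_C_mul]
  field_simp

theorem s2Ser_expTw (E : C → C) (j : C) :
    s2Ser (expTw E j) θ = PowerSeries.C j⁻¹ * s1Ser E θ j := by
  ext n
  simp only [s1Ser, s2Ser, expTw, PowerSeries.coeff_mk, PowerSeries.coeff_C_mul, mul_one_div]

theorem zSer_expTw (E : C → C) {j : C} (hj : j ≠ 0) (w : C) :
    zSer (expTw E j) θ (w / j) = s1Ser E θ w * (s1Ser E θ j)⁻¹ := by
  have hC : PowerSeries.C j⁻¹ * PowerSeries.C j = 1 := by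
    rw [← map_mul, inv_mul_cancel₀ hj, map_one]
  rw [zSer, s1Ser_expTw E hj, s2Ser_expTw, PowerSeries.mul_inv_rev, PowerSeries.C_inv, inv_inv]
  linear_combination (s1Ser E θ w * (s1Ser E θ j)⁻¹) * hC

variable (E : C →+ C)

theorem s1Ser_add (x y : C) : s1Ser E θ (x + y) = s1Ser E θ x + s1Ser E θ y := by
  ext n
  simp [s1Ser, add_div]

theorem s1Ser_mul_eq_C_mul {c : C} (hc : ∀ x, E (c * x) = c * E x) (x : C) :
    s1Ser E θ (c * x) = PowerSeries.C c * s1Ser E θ x := by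
  ext n
  simp [s1Ser, mul_div_assoc, hc]

theorem s1Ser_mul_eq_X_mul (hθ : θ ≠ 0) {l : C} (hl : E l = 0) :
    s1Ser E θ (θ * l) = PowerSeries.X * s1Ser E θ l := by
  ext (_ | n)
  · simp [s1Ser, hθ, hl]
  · simp only [s1Ser, PowerSeries.coeff_mk, PowerSeries.coeff_succ_X_mul]
    rw [pow_succ', mul_div_mul_left _ _ hθ]

theorem s1Ser_pow_mul_eq_X_pow_mul (hθ : θ ≠ 0) {l : C} (hl : ∀ m, E (θ ^ m * l) = 0) (k : ℕ) :
    s1Ser E θ (θ ^ k * l) = PowerSeries.X ^ k * s1Ser E θ l := by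
  induction k with
  | zero => simp
  | succ k ih => rw [pow_succ', mul_assoc, s1Ser_mul_eq_X_mul E hθ (hl k), ih, pow_succ', mul_assoc]

theorem coe_mul_s1Ser (hθ : θ ≠ 0) {b : Polynomial C}
    (hb : ∀ n x, E (b.coeff n * x) = b.coeff n * E x) {l : C} (hl : ∀ m, E (θ ^ m * l) = 0) :
    (b : PowerSeries C) * s1Ser E θ l = s1Ser E θ (b.eval θ * l) := by
  let S : C →+ PowerSeries C := AddMonoidHom.mk' (s1Ser E θ) (s1Ser_add E)
  change _ = S _
  rw [Polynomial.eval_eq_sum_range, Finset.sum_mul, map_sum]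
  conv_lhs => rw [b.as_sum_range_C_mul_X_pow, ← Polynomial.coeToPowerSeries.ringHom_apply,
    map_sum, Finset.sum_mul]
  refine Finset.sum_congr rfl fun k _ => ?_
  simp only [S, AddMonoidHom.mk'_apply, map_mul, map_pow, Polynomial.coeToPowerSeries.ringHom_apply,
    Polynomial.coe_C, Polynomial.coe_X, mul_assoc, s1Ser_mul_eq_C_mul E (hb k),
    s1Ser_pow_mul_eq_X_pow_mul E hθ hl]

end DeformationSeries

section FactorOfAutomorphy

variable {C : Type*} [Field C] (E : C →+ C) {θ : C}

theorem s1Ser_one : s1Ser E θ 1 = s2Ser E θ := rfl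

theorem JSer_eq_s1Ser_mul_inv (hθ : θ ≠ 0) {c d : Polynomial C}
    (hc : ∀ n x, E (c.coeff n * x) = c.coeff n * E x)
    (hd : ∀ n x, E (d.coeff n * x) = d.coeff n * E x) {x : C} (hx : ∀ m, E (θ ^ m * x) = 0)
    (h1 : ∀ m, E (θ ^ m) = 0) (hs2 : E (1 / θ) ≠ 0) :
    JSer c d E θ x = s1Ser E θ (c.eval θ * x + d.eval θ) * (s2Ser E θ)⁻¹ := by
  have h1' : ∀ m, E (θ ^ m * 1) = 0 := by simpa using h1
  have hunit : s2Ser E θ * (s2Ser E θ)⁻¹ = 1 :=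
    PowerSeries.mul_inv_cancel _ (by simpa [s2Ser] using hs2)
  rw [JSer, zSer, s1Ser_add, ← coe_mul_s1Ser E hθ hc hx, ← mul_one (d.eval θ),
    ← coe_mul_s1Ser E hθ hd h1', s1Ser_one]
  linear_combination -(d : PowerSeries C) * hunit

variable {p : ℕ} [ExpChar C p] {e : ℕ} {z : C}

theorem zSer_expTw_mul_JSer (hθ : θ ≠ 0)
    (hE : ∀ c : C, c ^ p ^ e = c → ∀ x, E (c * x) = c * E x)
    (hΛ : ∀ x ∈ fqLattice C p e θ z, E x = 0) (h1 : E (1 / θ) ≠ 0) {a b c d : Polynomial C}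
    (ha : a ∈ fqPolynomials C p e) (hb : b ∈ fqPolynomials C p e)
    (hc : c ∈ fqPolynomials C p e) (hd : d ∈ fqPolynomials C p e)
    (hj : E ((c.eval θ * z + d.eval θ) / θ) ≠ 0) :
    zSer (expTw E (c.eval θ * z + d.eval θ)) θ
        ((a.eval θ * z + b.eval θ) / (c.eval θ * z + d.eval θ)) * JSer c d E θ z
      = JSer a b E θ z := by
  have hlin {f : Polynomial C} (hf : f ∈ fqPolynomials C p e) (n : ℕ) (x : C) :
      E (f.coeff n * x) = f.coeff n * E x :=
    hE _ (mem_fqPolynomials.1 hf n) x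
  have hker {x : C} (hx : x ∈ fqLattice C p e θ z) (m : ℕ) : E (θ ^ m * x) = 0 :=
    hΛ _ (pow_mul_mem_fqLattice hx m)
  have hz : ∀ m, E (θ ^ m * z) = 0 :=
    hker (by simpa using eval_mul_add_eval_mem_fqLattice (θ := θ) (z := z) (one_mem _) (zero_mem _))
  have h1' : ∀ m, E (θ ^ m) = 0 := by
    simpa using hker (eval_mul_add_eval_mem_fqLattice (θ := θ) (z := z) (zero_mem _) (one_mem _))
  set j := c.eval θ * z + d.eval θ
  have hj0 : j ≠ 0 := fun h => hj (by rw [h, zero_div, map_zero])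
  have hunit : s1Ser E θ j * (s1Ser E θ j)⁻¹ = 1 :=
    PowerSeries.mul_inv_cancel _ (by simpa [s1Ser] using hj)
  rw [zSer_expTw E hj0, JSer_eq_s1Ser_mul_inv E hθ (hlin hc) (hlin hd) hz h1' h1,
    JSer_eq_s1Ser_mul_inv E hθ (hlin ha) (hlin hb) hz h1' h1]
  linear_combination s1Ser E θ (a.eval θ * z + b.eval θ) * (s2Ser E θ)⁻¹ * hunit

end FactorOfAutomorphy

theorem J_cocycle_general
    {C : Type*} [NormedField C] [CompleteSpace C] [IsUltrametricDist C]
    (p e : ℕ) (hp : p.Prime) (he : 0 < e) [CharP C p]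
    (q : ℕ) (hq : q = p ^ e)
    (θ : C) (hθ : ‖θ‖ = (q : ℝ))
    (Kinf : Subfield C) (hθK : θ ∈ Kinf) (hFqK : ∀ c : C, c ^ q = c → c ∈ Kinf)
    (z : C) (hz : z ∉ Kinf)
    (α : ℕ → C)
    (hdecay : ∀ r : ℝ, 0 < r →
      Filter.Tendsto (fun i : ℕ => ‖α i‖ * r ^ (q ^ i)) Filter.atTop (nhds 0))
    (E : C → C) (hE : ∀ ζ : C, E ζ = ∑' i : ℕ, α i * ζ ^ q ^ i)
    (hker : ∀ x : C, E x = 0 ↔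
      ∃ a b : Polynomial C, (∀ n : ℕ, a.coeff n ^ q = a.coeff n) ∧
        (∀ n : ℕ, b.coeff n ^ q = b.coeff n) ∧ x = a.eval θ + b.eval θ * z)
    (cγ dγ aδ bδ cδ dδ : Polynomial C)
    (haδ : ∀ n : ℕ, aδ.coeff n ^ q = aδ.coeff n)
    (hbδ : ∀ n : ℕ, bδ.coeff n ^ q = bδ.coeff n)
    (hcδ : ∀ n : ℕ, cδ.coeff n ^ q = cδ.coeff n)
    (hdδ : ∀ n : ℕ, dδ.coeff n ^ q = dδ.coeff n)
    (uδ : C) (huδ0 : uδ ≠ 0)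
    (hdetδ : aδ * dδ - bδ * cδ = Polynomial.C uδ) :
    JSer (cγ * aδ + dγ * cδ) (cγ * bδ + dγ * dδ) E θ z
      = JSer cγ dγ (expTw E (cδ.eval θ * z + dδ.eval θ)) θ
            ((aδ.eval θ * z + bδ.eval θ) / (cδ.eval θ * z + dδ.eval θ))
          * JSer cδ dδ E θ z := by
  subst hq
  have : ExpChar C p := ExpChar.prime hp
  have hq1 : 1 < p ^ e := Nat.one_lt_pow he.ne' hp.one_lt
  have hθ1 : 1 < ‖θ‖ := by rw [hθ]; exact_mod_cast hq1
  have hθ0 : θ ≠ 0 := norm_pos_iff.1 (by linarith)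
  obtain ⟨E, rfl⟩ : ∃ E' : C →+ C, ⇑E' = E := ⟨AddMonoidHom.mk' E fun x y => by
    simp only [hE]; exact tsum_mul_add_pow_pow e (summable_mul_pow_pow_of_tendsto_s11 hdecay) x y, rfl⟩
  have hlin (c : C) (hc : c ^ p ^ e = c) (x : C) : E (c * x) = c * E x := by
    simp only [hE]; exact tsum_mul_mul_pow_pow_of_pow_eq_self α hc x
  have hΛ : ∀ x ∈ fqLattice C p e θ z, E x = 0 := by
    rintro x ⟨a, ha, b, hb, rfl⟩
    exact (hker _).2 ⟨a, b, mem_fqPolynomials.1 ha, mem_fqPolynomials.1 hb, rfl⟩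
  have hkerΛ (x : C) (hx : E x = 0) : x ∈ fqLattice C p e θ z := by
    obtain ⟨a, b, ha, hb, rfl⟩ := (hker x).1 hx
    exact ⟨a, mem_fqPolynomials.2 ha, b, mem_fqPolynomials.2 hb, rfl⟩
  have hindep := fun a (ha : a ∈ fqPolynomials C p e) b (hb : b ∈ fqPolynomials C p e) =>
    eq_zero_of_eval_add_eval_mul_eq_zero hq1 hθ1 hθK hFqK hz ha hb
  have h1 : E (1 / θ) ≠ 0 := fun h =>
    div_notMem_fqLattice hθ0 hindep (zero_mem _) (one_mem _) (Or.inr (by simp))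
      (by simpa using hkerΛ _ h)
  have hδ0 : cδ.coeff 0 ≠ 0 ∨ dδ.coeff 0 ≠ 0 := by
    by_contra! h
    apply huδ0
    simpa [Polynomial.mul_coeff_zero, h.1, h.2] using (congrArg (Polynomial.coeff · 0) hdetδ).symm
  have hcδ' := mem_fqPolynomials.2 hcδ
  have hdδ' := mem_fqPolynomials.2 hdδ
  have key := zSer_expTw_mul_JSer E hθ0 hlin hΛ h1 (mem_fqPolynomials.2 haδ)
    (mem_fqPolynomials.2 hbδ) hcδ' hdδ'
    fun h => div_notMem_fqLattice hθ0 hindep hcδ' hdδ' hδ0 (hkerΛ _ h)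
  simp only [JSer] at key ⊢
  push_cast
  linear_combination -(cγ : PowerSeries C) * key

/-- Cocycle identity `𝐉_{γδ}(z) = 𝐉_γ(δ(z))·𝐉_δ(z)` for the deformed factors of
automorphy attached to an entire `𝔽_q`-linear series `E` with zero set exactly
`Λ_z = A + Az` (with `𝔽_q` identified with `{c : C | c^q = c}`, `A = 𝔽_q[θ]`),
where matrices `γ, δ ∈ GL₂(A)` are given by polynomial entries with determinant a
nonzero constant in `𝔽_q`. -/
theorem J_cocycle
    {C : Type*} [NormedField C] [CompleteSpace C] [IsAlgClosed C] [IsUltrametricDist C]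
    (p e : ℕ) (hp : p.Prime) (he : 0 < e) [CharP C p]
    (q : ℕ) (hq : q = p ^ e)
    (θ : C) (hθ : ‖θ‖ = (q : ℝ))
    (Kinf : Subfield C) (hθK : θ ∈ Kinf) (hFqK : ∀ c : C, c ^ q = c → c ∈ Kinf)
    (z : C) (hz : z ∉ Kinf)
    (α : ℕ → C) (hα0 : α 0 = 1)
    (hdecay : ∀ r : ℝ, 0 < r →
      Filter.Tendsto (fun i : ℕ => ‖α i‖ * r ^ (q ^ i)) Filter.atTop (nhds 0))
    (E : C → C) (hE : ∀ ζ : C, E ζ = ∑' i : ℕ, α i * ζ ^ q ^ i)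
    (hker : ∀ x : C, E x = 0 ↔
      ∃ a b : Polynomial C, (∀ n : ℕ, a.coeff n ^ q = a.coeff n) ∧
        (∀ n : ℕ, b.coeff n ^ q = b.coeff n) ∧ x = a.eval θ + b.eval θ * z)
    (aγ bγ cγ dγ aδ bδ cδ dδ : Polynomial C)
    (haγ : ∀ n : ℕ, aγ.coeff n ^ q = aγ.coeff n)
    (hbγ : ∀ n : ℕ, bγ.coeff n ^ q = bγ.coeff n)
    (hcγ : ∀ n : ℕ, cγ.coeff n ^ q = cγ.coeff n)
    (hdγ : ∀ n : ℕ, dγ.coeff n ^ q = dγ.coeff n)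
    (haδ : ∀ n : ℕ, aδ.coeff n ^ q = aδ.coeff n)
    (hbδ : ∀ n : ℕ, bδ.coeff n ^ q = bδ.coeff n)
    (hcδ : ∀ n : ℕ, cδ.coeff n ^ q = cδ.coeff n)
    (hdδ : ∀ n : ℕ, dδ.coeff n ^ q = dδ.coeff n)
    (uγ : C) (huγ : uγ ^ q = uγ) (huγ0 : uγ ≠ 0)
    (hdetγ : aγ * dγ - bγ * cγ = Polynomial.C uγ)
    (uδ : C) (huδ : uδ ^ q = uδ) (huδ0 : uδ ≠ 0)
    (hdetδ : aδ * dδ - bδ * cδ = Polynomial.C uδ) :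
    JSer (cγ * aδ + dγ * cδ) (cγ * bδ + dγ * dδ) E θ z
      = JSer cγ dγ (expTw E (cδ.eval θ * z + dδ.eval θ)) θ
            ((aδ.eval θ * z + bδ.eval θ) / (cδ.eval θ * z + dδ.eval θ))
          * JSer cδ dδ E θ z :=
  J_cocycle_general p e hp he q hq θ hθ Kinf hθK hFqK z hz α hdecay E hE hker cγ dγ aδ bδ cδ dδ haδ
    hbδ hcδ hdδ uδ huδ0 hdetδ
end

section
/- Let q ≥ 2 be an integer and let w, l be integers with l ≥ 1 and w ≥ 2l. Set μ = 12(q²−1)(w−l) and let k be the smallest integer ≥ 0 such that q^k > 3·log_q μ. Then k ≥ 1, and the following two inequalities hold: (i) q^k·(μ−1)²/(9(q−1)) > (w−l) + q^k·μ·l; (ii) q^k·μ ≤ 252·q·(q²−1)·(w−l)·max{1, log_q(w−l)}. -/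
set_option maxHeartbeats 1000000


/-- The explicit arithmetic estimates in the proof of the main multiplicity bound:
with `q ≥ 2`, `l ≥ 1`, `w ≥ 2l`, `μ = 12(q²-1)(w-l)` and `k` the smallest natural
number with `q^k > 3 log_q μ`, one has `k ≥ 1`,
`q^k (μ-1)²/(9(q-1)) > (w-l) + q^k μ l`, and
`q^k μ ≤ 252 q (q²-1)(w-l) max{1, log_q(w-l)}`. -/
theorem multiplicity_estimate_arithmetic
    (q w l : ℤ) (hq : 2 ≤ q) (hl : 1 ≤ l) (hw : 2 * l ≤ w)
    (μ : ℤ) (hμ : μ = 12 * (q ^ 2 - 1) * (w - l))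
    (k : ℕ)
    (hk : (q : ℝ) ^ k > 3 * Real.logb (q : ℝ) (μ : ℝ))
    (hkmin : ∀ j : ℕ, (q : ℝ) ^ j > 3 * Real.logb (q : ℝ) (μ : ℝ) → k ≤ j) :
    1 ≤ k ∧
    (q : ℝ) ^ k * ((μ : ℝ) - 1) ^ 2 / (9 * ((q : ℝ) - 1))
        > ((w : ℝ) - (l : ℝ)) + (q : ℝ) ^ k * (μ : ℝ) * (l : ℝ) ∧
    (q : ℝ) ^ k * (μ : ℝ)
        ≤ 252 * (q : ℝ) * ((q : ℝ) ^ 2 - 1) * ((w : ℝ) - (l : ℝ)) *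
            max 1 (Real.logb (q : ℝ) ((w : ℝ) - (l : ℝ))) := by
  have hq2 : (2:ℝ) ≤ (q:ℝ) := by exact_mod_cast hq
  have hq1 : (1:ℝ) < (q:ℝ) := by linarith
  have hl1 : (1:ℝ) ≤ (l:ℝ) := by exact_mod_cast hl
  have hw2 : 2 * (l:ℝ) ≤ (w:ℝ) := by exact_mod_cast hw
  set M : ℝ := (w:ℝ) - (l:ℝ) with hM
  have hM1 : (1:ℝ) ≤ M := by simp only [hM]; linarith
  have hM0 : (0:ℝ) < M := by linarith
  have hlM : (l:ℝ) ≤ M := by simp only [hM]; linarith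
  have hμr : (μ:ℝ) = 12 * ((q:ℝ)^2 - 1) * M := by
    rw [hμ]; push_cast; ring
  have hq4 : (4:ℝ) ≤ (q:ℝ)^2 := by nlinarith
  have h36 : (36:ℝ) ≤ 12 * ((q:ℝ)^2 - 1) := by linarith
  have hμ36 : 36 * M ≤ (μ:ℝ) := by
    rw [hμr]; exact mul_le_mul_of_nonneg_right h36 (by linarith)
  have hμpos : (0:ℝ) < (μ:ℝ) := by linarith
  have hμq2 : (q:ℝ)^2 ≤ (μ:ℝ) := by
    rw [hμr]
    nlinarith [mul_le_mul_of_nonneg_left hM1 (show (0:ℝ) ≤ 12 * ((q:ℝ)^2 - 1) by linarith)]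
  -- k ≥ 1
  have hlog2 : (2:ℝ) ≤ Real.logb (q:ℝ) (μ:ℝ) := by
    have h1 : Real.logb (q:ℝ) ((q:ℝ)^2) ≤ Real.logb (q:ℝ) (μ:ℝ) :=
      Real.logb_le_logb_of_le hq1 (by positivity) hμq2
    rwa [Real.logb_pow, Real.logb_self_eq_one hq1, mul_one] at h1
  have hk1 : 1 ≤ k := by
    rcases Nat.eq_zero_or_pos k with h0 | h
    · exfalso; rw [h0] at hk; simp at hk; linarith
    · exact h
  refine ⟨hk1, ?_, ?_⟩
  · -- inequality (i)
    have h9 : (0:ℝ) < 9 * ((q:ℝ) - 1) := by linarith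
    rw [gt_iff_lt, lt_div_iff₀ h9]
    have hQq : (q:ℝ) ≤ (q:ℝ)^k := by
      calc (q:ℝ) = (q:ℝ)^1 := (pow_one _).symm
      _ ≤ (q:ℝ)^k := pow_le_pow_right₀ (by linarith) hk1
    have hQpos : (0:ℝ) < (q:ℝ)^k := by positivity
    have hA : 9 * ((q:ℝ)-1) * (μ:ℝ) * (l:ℝ) ≤ 9 * ((q:ℝ)-1) * (μ:ℝ) * M :=
      mul_le_mul_of_nonneg_left hlM (by nlinarith)
    have h1 : 27 * M - 2 ≤ (μ:ℝ) - 2 - 9 * ((q:ℝ)-1) * M := by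
      rw [hμr]
      nlinarith [mul_le_mul_of_nonneg_right
        (show (27:ℝ) ≤ 12 * ((q:ℝ)^2 - 1) - 9 * ((q:ℝ)-1) by nlinarith)
        (show (0:ℝ) ≤ M by linarith)]
    have h2 : 900 * M ≤ (μ:ℝ) * (27 * M - 2) := by
      have := mul_le_mul hμ36 (show (25:ℝ) ≤ 27 * M - 2 by linarith)
        (by norm_num) (le_of_lt hμpos)
      linarith
    have h3 : (μ:ℝ) * (27 * M - 2) ≤ (μ:ℝ) * ((μ:ℝ) - 2 - 9 * ((q:ℝ)-1) * M) :=
      mul_le_mul_of_nonneg_left h1 (le_of_lt hμpos)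
    have key : 900 * M ≤ ((μ:ℝ) - 1)^2 - 9 * ((q:ℝ)-1) * (μ:ℝ) * (l:ℝ) := by
      nlinarith [hA, h2, h3]
    nlinarith [mul_le_mul_of_nonneg_left key (le_of_lt hQpos),
      mul_le_mul_of_nonneg_left hQq (show (0:ℝ) ≤ 900 * M by linarith),
      mul_le_mul_of_nonneg_right hq2 (show (0:ℝ) ≤ M by linarith)]
  · -- inequality (ii)
    have hkm : (q:ℝ)^(k-1) ≤ 3 * Real.logb (q:ℝ) (μ:ℝ) := by
      by_contra h
      push_neg at h
      have := hkmin (k-1) h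
      omega
    have hqk : (q:ℝ)^k = (q:ℝ) * (q:ℝ)^(k-1) := by
      obtain ⟨j, rfl⟩ : ∃ j, k = j + 1 := ⟨k - 1, by omega⟩
      rw [Nat.add_sub_cancel, pow_succ, mul_comm]
    have hQ3 : (q:ℝ)^k ≤ 3 * (q:ℝ) * Real.logb (q:ℝ) (μ:ℝ) := by
      rw [hqk]
      calc (q:ℝ) * (q:ℝ)^(k-1) ≤ (q:ℝ) * (3 * Real.logb (q:ℝ) (μ:ℝ)) :=
            mul_le_mul_of_nonneg_left hkm (by linarith)
        _ = 3 * (q:ℝ) * Real.logb (q:ℝ) (μ:ℝ) := by ring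
    have hmax1 : (1:ℝ) ≤ max 1 (Real.logb (q:ℝ) M) := le_max_left _ _
    have hlogM : Real.logb (q:ℝ) M ≤ max 1 (Real.logb (q:ℝ) M) := le_max_right _ _
    have h16 : 16 * (q:ℝ)^2 ≤ (q:ℝ)^6 := by
      nlinarith [mul_nonneg (mul_nonneg (sq_nonneg (q:ℝ))
        (show (0:ℝ) ≤ (q:ℝ)^2 - 4 by linarith))
        (show (0:ℝ) ≤ (q:ℝ)^2 + 4 by positivity)]
    have h12 : 12 * ((q:ℝ)^2 - 1) ≤ (q:ℝ)^6 := by nlinarith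
    have hμle : (μ:ℝ) ≤ (q:ℝ)^6 * M := by
      rw [hμr]; exact mul_le_mul_of_nonneg_right h12 (by linarith)
    have hlog7 : Real.logb (q:ℝ) (μ:ℝ) ≤ 7 * max 1 (Real.logb (q:ℝ) M) := by
      have h1 : Real.logb (q:ℝ) (μ:ℝ) ≤ Real.logb (q:ℝ) ((q:ℝ)^6 * M) :=
        Real.logb_le_logb_of_le hq1 hμpos hμle
      rw [Real.logb_mul (by positivity) (by linarith), Real.logb_pow,
        Real.logb_self_eq_one hq1, mul_one] at h1
      push_cast at h1
      linarith
    have hfac : (0:ℝ) < 36 * (q:ℝ) * ((q:ℝ)^2 - 1) * M := by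
      nlinarith [mul_pos (mul_pos (mul_pos (show (0:ℝ) < 36 by norm_num)
        (show (0:ℝ) < (q:ℝ) by linarith))
        (show (0:ℝ) < (q:ℝ)^2 - 1 by linarith)) hM0]
    calc (q:ℝ)^k * (μ:ℝ) ≤ (3 * (q:ℝ) * Real.logb (q:ℝ) (μ:ℝ)) * (μ:ℝ) :=
          mul_le_mul_of_nonneg_right hQ3 (le_of_lt hμpos)
      _ = 36 * (q:ℝ) * ((q:ℝ)^2 - 1) * M * Real.logb (q:ℝ) (μ:ℝ) := by rw [hμr]; ring
      _ ≤ 36 * (q:ℝ) * ((q:ℝ)^2 - 1) * M * (7 * max 1 (Real.logb (q:ℝ) M)) :=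
          mul_le_mul_of_nonneg_left hlog7 (le_of_lt hfac)
      _ = 252 * (q:ℝ) * ((q:ℝ)^2 - 1) * M * max 1 (Real.logb (q:ℝ) M) := by ring
end
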